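/- arXiv:2202.01904 — 2 statements merged into one kernel-verified Lean document; each statement's English description precedes it below -/
import Mathlib

section
/- Let t > 0, λ1, λ2 > 0 and k ≥ 1 an integer. Then P(T_{2k} ≤ t < T_{2k+1}) = (λ1 t)^k (λ2 t)^k e^{−λ1 t} · E^{k}_{1,2k+1}(t(λ1−λ2)), i.e. the probability that the alternating-rate counting process N satisfies N(t) = 2k equals (λ1 t)^k (λ2 t)^k e^{−λ1 t} E^{k}_{1,2k+1}(t(λ1−λ2)). -/
open MeasureTheory ProbabilityTheory Real
open scoped ENNReal

noncomputable section

variable {Ω : Type*}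

/-- Generalized Mittag-Leffler function `E^γ_{ν,δ}(x)`, with the convention
`E^0_{ν,δ}(x) = 1/Γ(δ)`. -/
def mittagLeffler (ν δ γ x : ℝ) : ℝ :=
  if γ = 0 then 1 / Real.Gamma δ
  else ∑' j : ℕ, Real.Gamma (γ + j) / (Real.Gamma γ * j.factorial) * x ^ j / Real.Gamma (ν * j + δ)

/-- Arrival times: `T n = W 0 + ⋯ + W (n-1)`, where `W i` is the `(i+1)`-th waiting time
(so the waiting times are indexed from `0`). -/
def arrival (W : ℕ → Ω → ℝ) (n : ℕ) (ω : Ω) : ℝ := ∑ i ∈ Finset.range n, W i ω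

/-- Number of arrivals up to time `u`: `N(u) = #{n ≥ 1 : T n ≤ u}`. -/
def count (W : ℕ → Ω → ℝ) (u : ℝ) (ω : Ω) : ℕ :=
  Set.ncard {n : ℕ | 1 ≤ n ∧ arrival W n ω ≤ u}

/-- The event `{N(t) = n}`, which coincides with `{T n ≤ t < T (n+1)}`. -/
def countEq (W : ℕ → Ω → ℝ) (n : ℕ) (t : ℝ) : Set Ω :=
  {ω | arrival W n ω ≤ t ∧ t < arrival W (n + 1) ω}

/-- The telegraph process moving with velocity `v0` when `N(r)` is even and `v1` when
`N(r)` is odd. -/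
def telegraph (W : ℕ → Ω → ℝ) (v0 v1 : ℝ) (u : ℝ) (ω : Ω) : ℝ :=
  ∫ r in (0:ℝ)..u, (if Even (count W r ω) then v0 else v1)

/-- Modified Bessel function of the first kind of integer order `ν`. -/
def besselI (ν : ℕ) (x : ℝ) : ℝ :=
  ∑' k : ℕ, (x / 2) ^ (2 * k + ν) / (k.factorial * Real.Gamma (k + 1 + ν))

open Set

section Aux

lemma gammaPDFReal_nat' (n : ℕ) (hn : 1 ≤ n) (r x : ℝ) :
    gammaPDFReal (n : ℝ) r x =
      if 0 ≤ x then r ^ n / (n - 1).factorial * x ^ (n - 1) * Real.exp (-(r * x)) else 0 := by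
  obtain ⟨m, rfl⟩ := Nat.exists_eq_add_of_le hn
  unfold gammaPDFReal
  congr 1
  rw [show ((1 + m : ℕ) : ℝ) - 1 = ((m : ℕ) : ℝ) by push_cast; ring, Real.rpow_natCast,
    show ((1 + m : ℕ) : ℝ) = (m : ℝ) + 1 by push_cast; ring, Real.Gamma_nat_eq_factorial,
    show (1 + m) - 1 = m from by omega, Real.rpow_natCast]

lemma expMeasure_Ioi' {r : ℝ} (hr : 0 < r) {y : ℝ} (hy : 0 ≤ y) :
    expMeasure r (Ioi y) = ENNReal.ofReal (rexp (-(r * y))) := by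
  haveI : IsProbabilityMeasure (expMeasure r) := isProbabilityMeasure_expMeasure hr
  have h1 : expMeasure r (Ioi y) = 1 - expMeasure r (Iic y) := by
    rw [← compl_Iic]
    rw [measure_compl measurableSet_Iic (measure_ne_top _ _)]
    simp
  have h2 : expMeasure r (Iic y) = ENNReal.ofReal (1 - rexp (-(r * y))) := by
    rw [show expMeasure r = volume.withDensity (exponentialPDF r) from rfl,
      withDensity_apply _ measurableSet_Iic, lintegral_exponentialPDF_eq_antiDeriv hr, if_pos hy]
  rw [h1, h2, ← ENNReal.ofReal_one, ← ENNReal.ofReal_sub _ (by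
    have : rexp (-(r*y)) ≤ 1 := by
      rw [Real.exp_le_one_iff]
      have : 0 ≤ r * y := mul_nonneg hr.le hy
      linarith
    linarith)]
  norm_num

lemma expMeasure_Iic' {r : ℝ} (hr : 0 < r) (y : ℝ) :
    expMeasure r (Iic y) = ENNReal.ofReal (if 0 ≤ y then 1 - Real.exp (-(r * y)) else 0) := by
  rw [show expMeasure r = volume.withDensity (exponentialPDF r) from rfl,
    withDensity_apply _ measurableSet_Iic, lintegral_exponentialPDF_eq_antiDeriv hr]

lemma conv_real_identity' (n : ℕ) (hn : 1 ≤ n) {r : ℝ} (_hr : 0 < r) (x : ℝ) :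
    ∫ u in (0:ℝ)..x, (r ^ n / (n-1).factorial * u ^ (n-1) * Real.exp (-(r*u))
        - r ^ (n+1) / n.factorial * u ^ n * Real.exp (-(r*u)))
      = r ^ n / n.factorial * x ^ n * Real.exp (-(r*x)) := by
  have key : ∀ u : ℝ, HasDerivAt (fun u : ℝ => r ^ n / n.factorial * u ^ n * Real.exp (-(r*u)))
      (r ^ n / (n-1).factorial * u ^ (n-1) * Real.exp (-(r*u))
        - r ^ (n+1) / n.factorial * u ^ n * Real.exp (-(r*u))) u := by
    intro u
    have h1 : HasDerivAt (fun u : ℝ => u ^ n) (n * u ^ (n-1)) u := by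
      simpa using hasDerivAt_pow n u
    have h2 : HasDerivAt (fun u : ℝ => Real.exp (-(r*u))) (-r * Real.exp (-(r*u))) u := by
      have : HasDerivAt (fun u : ℝ => -(r*u)) (-r) u := by
        have h := ((hasDerivAt_id u).const_mul r).neg
        exact h.congr_deriv (by ring)
      simpa [mul_comm] using this.exp
    have := (h1.mul h2).const_mul (r ^ n / n.factorial)
    convert this using 1
    · ext u; ring
    · rfl
    · ext u; simp only [Pi.mul_apply]; ring
    have hfac : (n.factorial : ℝ) = n * (n-1).factorial := by
      obtain ⟨m, rfl⟩ := Nat.exists_eq_add_of_le hn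
      rw [show 1 + m - 1 = m from by omega, show 1 + m = m + 1 from by omega, Nat.factorial_succ]
      push_cast; ring
    field_simp [hfac]
    rw [hfac]; ring
  rw [intervalIntegral.integral_eq_sub_of_hasDerivAt (fun u _ => key u) ?_]
  · rw [zero_pow (by omega)]; ring
  · apply Continuous.intervalIntegrable
    continuity

lemma map_add_exp' {Ω : Type*} [MeasurableSpace Ω] (P : Measure Ω) [IsProbabilityMeasure P]
    {X Y : Ω → ℝ} (hX : Measurable X) (hY : Measurable Y) (hXY : IndepFun X Y P)
    {n : ℕ} (hn : 1 ≤ n) {r : ℝ} (hr : 0 < r)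
    (hlX : P.map X = gammaMeasure n r) (hlY : P.map Y = expMeasure r) :
    P.map (fun ω => X ω + Y ω) = gammaMeasure ((n : ℝ) + 1) r := by
  have hpos : (0:ℝ) < n := by exact_mod_cast hn
  haveI : IsProbabilityMeasure (expMeasure r) := isProbabilityMeasure_expMeasure hr
  haveI : IsProbabilityMeasure (gammaMeasure ((n:ℝ)+1) r) :=
    isProbabilityMeasure_gammaMeasure (by linarith) hr
  haveI : IsProbabilityMeasure (P.map (fun ω => X ω + Y ω)) :=
    Measure.isProbabilityMeasure_map (hX.add hY).aemeasurable
  refine Measure.ext_of_Iic _ _ fun a => ?_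
  have hB : MeasurableSet {p : ℝ × ℝ | p.1 + p.2 ≤ a} :=
    measurableSet_le (by fun_prop) measurable_const
  rw [Measure.map_apply (f := fun ω => X ω + Y ω) (hX.add hY) measurableSet_Iic,
    show (fun ω => X ω + Y ω) ⁻¹' Iic a
      = (fun ω => (X ω, Y ω)) ⁻¹' {p : ℝ × ℝ | p.1 + p.2 ≤ a} from rfl,
    ← Measure.map_apply (hX.prodMk hY) hB,
    (indepFun_iff_map_prod_eq_prod_map_map hX.aemeasurable hY.aemeasurable).mp hXY,
    hlX, hlY, Measure.prod_apply hB]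
  have hmk : ∀ u : ℝ, (Prod.mk u ⁻¹' {p : ℝ × ℝ | p.1 + p.2 ≤ a}) = Iic (a - u) := by
    intro u; ext v; simp [le_sub_iff_add_le']
  simp_rw [hmk, expMeasure_Iic' hr]
  have hpdfm : ∀ (b : ℝ), Measurable (gammaPDF b r) :=
    fun b => (measurable_gammaPDFReal _ _).ennreal_ofReal
  have hFm : Measurable (fun x : ℝ => ENNReal.ofReal
      (if 0 ≤ a - x then 1 - rexp (-(r * (a - x))) else 0)) := by
    refine Measurable.ennreal_ofReal (Measurable.ite ?_ (by fun_prop) measurable_const)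
    have : {x : ℝ | 0 ≤ a - x} = Iic a := by ext x; simp [sub_nonneg]
    rw [this]; exact measurableSet_Iic
  rw [show gammaMeasure (n : ℝ) r = volume.withDensity (gammaPDF (n:ℝ) r) from rfl,
    lintegral_withDensity_eq_lintegral_mul volume (hpdfm _) hFm]
  rw [show gammaMeasure ((n:ℝ)+1) r = volume.withDensity (gammaPDF ((n:ℝ)+1) r) from rfl,
    withDensity_apply _ measurableSet_Iic]
  by_cases ha : 0 ≤ a
  · -- main case
    set c : ℝ := r ^ n / (n-1).factorial with hc
    set g : ℝ → ℝ := fun u => c * u ^ (n-1) * rexp (-(r*u)) * (1 - rexp (-(r*(a-u)))) with hg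
    set h : ℝ → ℝ := fun u => r ^ (n+1) / n.factorial * u ^ n * rexp (-(r*u)) with hh
    have hgc : Continuous g := by fun_prop
    have hhc : Continuous h := by fun_prop
    have hLHS : (fun x => (gammaPDF (n:ℝ) r * fun x => ENNReal.ofReal
        (if 0 ≤ a - x then 1 - rexp (-(r * (a - x))) else 0)) x)
        = (Icc 0 a).indicator (fun u => ENNReal.ofReal (g u)) := by
      funext u
      by_cases hu : u ∈ Icc 0 a
      · rw [Set.indicator_of_mem hu]
        simp only [Pi.mul_apply]
        rw [show gammaPDF (n:ℝ) r u = ENNReal.ofReal (gammaPDFReal (n:ℝ) r u) from rfl,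
          gammaPDFReal_nat' n hn, if_pos hu.1, if_pos (by linarith [hu.2] : 0 ≤ a - u),
          ← ENNReal.ofReal_mul (mul_nonneg (mul_nonneg (by positivity)
            (pow_nonneg hu.1 _)) (Real.exp_pos _).le)]
      · rw [Set.indicator_of_notMem hu]
        simp only [Pi.mul_apply]
        rcases not_and_or.mp hu with h0 | h1
        · rw [show gammaPDF (n:ℝ) r u = ENNReal.ofReal (gammaPDFReal (n:ℝ) r u) from rfl,
            gammaPDFReal_nat' n hn, if_neg h0, ENNReal.ofReal_zero, zero_mul]
        · rw [if_neg (by simp only [sub_nonneg]; exact h1), ENNReal.ofReal_zero, mul_zero]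
    rw [hLHS, lintegral_indicator measurableSet_Icc _]
    have hgint : IntegrableOn g (Icc 0 a) := hgc.integrableOn_Icc
    have hgnn : 0 ≤ᵐ[volume.restrict (Icc 0 a)] g := by
      refine (ae_restrict_iff' measurableSet_Icc).mpr (ae_of_all _ fun u hu => ?_)
      have h2 : rexp (-(r*(a-u))) ≤ 1 := by
        rw [Real.exp_le_one_iff]
        have : 0 ≤ r * (a - u) := mul_nonneg hr.le (by linarith [hu.2])
        linarith
      have h1 : (0:ℝ) ≤ c * u ^ (n-1) * rexp (-(r*u)) := by
        have : (0:ℝ) ≤ u := hu.1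
        positivity
      have := mul_nonneg h1 (by linarith : (0:ℝ) ≤ 1 - rexp (-(r*(a-u))))
      simpa [hg] using this
    rw [← ofReal_integral_eq_lintegral_ofReal hgint hgnn]
    -- RHS
    rw [lintegral_Iic_eq_lintegral_Iio_add_Icc _ ha,
      setLIntegral_congr_fun measurableSet_Iio
        (fun x (hx : x < 0) => gammaPDF_of_neg hx), lintegral_zero, zero_add,
      setLIntegral_congr_fun measurableSet_Icc
        ((fun u hu => show gammaPDF ((n:ℝ)+1) r u = ENNReal.ofReal (h u) by
          rw [show ((n:ℝ)+1) = ((n+1 : ℕ) : ℝ) by push_cast; ring,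
            show gammaPDF ((n+1:ℕ):ℝ) r u = ENNReal.ofReal (gammaPDFReal ((n+1:ℕ):ℝ) r u) from rfl,
            gammaPDFReal_nat' (n+1) (by omega), if_pos hu.1]
          simp [hh])),
      ← ofReal_integral_eq_lintegral_ofReal hhc.integrableOn_Icc
        ((ae_restrict_iff' measurableSet_Icc).mpr (ae_of_all _ fun u hu => by
          have : (0:ℝ) ≤ u := hu.1
          simp only [hh]; positivity))]
    congr 1
    rw [integral_Icc_eq_integral_Ioc, integral_Icc_eq_integral_Ioc,
      ← intervalIntegral.integral_of_le ha, ← intervalIntegral.integral_of_le ha]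
    -- real identity
    have e1 := conv_real_identity' n hn hr a
    have hn0 : (n:ℝ) ≠ 0 := by exact_mod_cast Nat.one_le_iff_ne_zero.mp hn
    have e2 : ∫ u in (0:ℝ)..a, u ^ (n-1) = a ^ n / n := by
      rw [integral_pow]
      rw [show (n-1) + 1 = n from by omega, zero_pow (by omega)]
      have : ((n-1 : ℕ) : ℝ) + 1 = (n : ℝ) := by
        rw [Nat.cast_sub hn]; push_cast; ring
      rw [this, sub_zero]
    have hgeq : ∀ u, g u = ((c * u ^ (n-1) * rexp (-(r*u)) - h u) + h u)
        - (c * rexp (-(r*a))) * u ^ (n-1) := by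
      intro u
      have hexp : rexp (-(r*u)) * rexp (-(r*(a-u))) = rexp (-(r*a)) := by
        rw [← Real.exp_add]; ring_nf
      simp only [hg, hh]
      calc c * u ^ (n-1) * rexp (-(r*u)) * (1 - rexp (-(r*(a-u))))
          = c * u ^ (n-1) * rexp (-(r*u))
            - c * u ^ (n-1) * (rexp (-(r*u)) * rexp (-(r*(a-u)))) := by ring
        _ = _ := by rw [hexp]; ring
    rw [intervalIntegral.integral_congr (fun u _ => hgeq u),
      intervalIntegral.integral_sub
        ((by fun_prop : Continuous (fun u => c * u ^ (n-1) * rexp (-(r*u)) - h u + h u)).intervalIntegrable _ _)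
        ((by fun_prop : Continuous (fun u : ℝ => (c * rexp (-(r*a))) * u ^ (n-1))).intervalIntegrable _ _),
      intervalIntegral.integral_add
        ((by fun_prop : Continuous (fun u => c * u ^ (n-1) * rexp (-(r*u)) - h u)).intervalIntegrable _ _)
        (hhc.intervalIntegrable _ _),
      intervalIntegral.integral_const_mul, e2]
    have e3 : ∫ u in (0:ℝ)..a, (c * u ^ (n-1) * rexp (-(r*u)) - h u)
        = r ^ n / n.factorial * a ^ n * rexp (-(r*a)) := by
      rw [← e1]
    rw [e3]
    have hfac : (n.factorial : ℝ) = n * (n-1).factorial := by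
      obtain ⟨m, rfl⟩ := Nat.exists_eq_add_of_le hn
      rw [show 1 + m - 1 = m from by omega, show 1 + m = m + 1 from by omega, Nat.factorial_succ]
      push_cast; ring
    have hXY : r ^ n / n.factorial * a ^ n * rexp (-(r*a))
        = c * rexp (-(r*a)) * (a ^ n / n) := by
      rw [hc, hfac]
      field_simp
    linarith
  · -- a < 0 : both sides zero
    have hL : ∀ x : ℝ, (gammaPDF (n:ℝ) r * fun x => ENNReal.ofReal
        (if 0 ≤ a - x then 1 - rexp (-(r * (a - x))) else 0)) x = 0 := by
      intro x
      simp only [Pi.mul_apply]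
      by_cases hx : 0 ≤ x
      · rw [if_neg (by linarith : ¬ 0 ≤ a - x), ENNReal.ofReal_zero, mul_zero]
      · rw [gammaPDF_of_neg (lt_of_not_ge hx), zero_mul]
    rw [lintegral_congr hL, lintegral_zero]
    refine (le_antisymm ?_ zero_le).symm
    calc ∫⁻ x in Iic a, gammaPDF ((n:ℝ)+1) r x
        ≤ ∫⁻ x in Iio 0, gammaPDF ((n:ℝ)+1) r x :=
          lintegral_mono_set (fun x hx => lt_of_le_of_lt hx (lt_of_not_ge ha))
      _ = 0 := lintegral_gammaPDF_of_nonpos le_rfl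

lemma law_sum' {Ω : Type*} [MeasurableSpace Ω] (P : Measure Ω) [IsProbabilityMeasure P]
    (W : ℕ → Ω → ℝ) (hmeas : ∀ i, Measurable (W i))
    (hindep : iIndepFun W P)
    {r : ℝ} (hr : 0 < r) (e : ℕ → ℕ) (he : StrictMono e)
    (hd : ∀ i, P.map (W (e i)) = expMeasure r) (n : ℕ) (hn : 1 ≤ n) :
    P.map (fun ω => ∑ i ∈ Finset.range n, W (e i) ω) = gammaMeasure n r := by
  induction n, hn using Nat.le_induction with
  | base =>
    have : (fun ω => ∑ i ∈ Finset.range 1, W (e i) ω) = W (e 0) := by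
      funext ω; simp
    rw [this, hd 0, show ((1:ℕ):ℝ) = 1 from Nat.cast_one]
    rfl
  | succ n hn ih =>
    have hsum : (∑ j ∈ (Finset.range n).image e, W j)
        = fun ω => ∑ i ∈ Finset.range n, W (e i) ω := by
      funext ω
      rw [Finset.sum_apply]
      rw [Finset.sum_image (fun a _ b _ h => he.injective h)]
    have hnotmem : e n ∉ (Finset.range n).image e := by
      simp only [Finset.mem_image, Finset.mem_range]
      rintro ⟨i, hi, hie⟩
      exact absurd (he.injective hie) (by omega)
    have hIndep : IndepFun (fun ω => ∑ i ∈ Finset.range n, W (e i) ω) (W (e n)) P := by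
      rw [← hsum]
      exact hindep.indepFun_finsetSum_of_notMem hmeas hnotmem
    have hXm : Measurable (fun ω => ∑ i ∈ Finset.range n, W (e i) ω) :=
      Finset.measurable_sum _ (fun i _ => hmeas (e i))
    have := map_add_exp' P hXm (hmeas (e n)) hIndep hn hr ih (hd n)
    rw [show ((n+1 : ℕ) : ℝ) = (n:ℝ) + 1 by push_cast; ring, ← this]
    congr 1
    funext ω
    rw [Finset.sum_range_succ]

lemma indep_sum_sum' {Ω : Type*} [MeasurableSpace Ω] {P : Measure Ω} {W : ℕ → Ω → ℝ}
    (hmeas : ∀ i, Measurable (W i)) (hindep : iIndepFun W P)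
    (S T : Finset ℕ) (hST : Disjoint S T) :
    IndepFun (fun ω => ∑ i ∈ S, W i ω) (fun ω => ∑ i ∈ T, W i ω) P := by
  have h := hindep.indepFun_finset S T hST hmeas
  have hgS : Measurable (fun v : (↥S → ℝ) => ∑ i, v i) :=
    Finset.measurable_sum _ (fun i _ => measurable_pi_apply i)
  have hgT : Measurable (fun v : (↥T → ℝ) => ∑ i, v i) :=
    Finset.measurable_sum _ (fun i _ => measurable_pi_apply i)
  have h2 := h.comp hgS hgT
  have eS : ((fun v : (↥S → ℝ) => ∑ i, v i) ∘ (fun a (i : ↥S) => W i a))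
      = fun ω => ∑ i ∈ S, W i ω := by
    funext ω
    simp only [Function.comp]
    rw [Finset.sum_coe_sort S (fun i => W i ω)]
  have eT : ((fun v : (↥T → ℝ) => ∑ i, v i) ∘ (fun a (i : ↥T) => W i a))
      = fun ω => ∑ i ∈ T, W i ω := by
    funext ω
    simp only [Function.comp]
    rw [Finset.sum_coe_sort T (fun i => W i ω)]
  rwa [eS, eT] at h2

lemma sum_range_two_mul' {M : Type*} [AddCommMonoid M] (g : ℕ → M) (k : ℕ) :
    ∑ i ∈ Finset.range (2*k), g i
      = ∑ i ∈ Finset.range k, g (2*i) + ∑ i ∈ Finset.range k, g (2*i+1) := by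
  induction k with
  | zero => simp
  | succ k ih =>
    rw [show 2*(k+1) = (2*k+1)+1 from by ring, Finset.sum_range_succ, Finset.sum_range_succ,
      ih, Finset.sum_range_succ, Finset.sum_range_succ (fun i => g (2*i+1))]
    abel

lemma lintegral_gamma_tail' (k : ℕ) (hk : 1 ≤ k) {r : ℝ} (hr : 0 < r) (b : ℝ) :
    ∫⁻ u, (if u ≤ b then ENNReal.ofReal (rexp (-(r * (b - u)))) else 0) ∂(gammaMeasure k r)
      = if 0 ≤ b then
          ENNReal.ofReal (r ^ k / (k-1).factorial * (b ^ k / k) * rexp (-(r * b))) else 0 := by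
  have hFm : Measurable (fun u : ℝ =>
      (if u ≤ b then ENNReal.ofReal (rexp (-(r * (b - u)))) else 0)) := by
    refine Measurable.ite measurableSet_Iic (by fun_prop) measurable_const
  have hpdfm : Measurable (gammaPDF (k:ℝ) r) := (measurable_gammaPDFReal _ _).ennreal_ofReal
  rw [show gammaMeasure (k : ℝ) r = volume.withDensity (gammaPDF (k:ℝ) r) from rfl,
    lintegral_withDensity_eq_lintegral_mul volume hpdfm hFm]
  set c : ℝ := r ^ k / (k-1).factorial with hc
  by_cases hb : 0 ≤ b
  · rw [if_pos hb]
    have hLHS : (fun u => (gammaPDF (k:ℝ) r * fun u => (if u ≤ b then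
        ENNReal.ofReal (rexp (-(r * (b - u)))) else 0)) u)
        = (Icc 0 b).indicator
            (fun u => ENNReal.ofReal ((c * u ^ (k-1) * rexp (-(r*u))) * rexp (-(r * (b-u))))) := by
      funext u
      by_cases hu : u ∈ Icc 0 b
      · rw [Set.indicator_of_mem hu]
        simp only [Pi.mul_apply]
        rw [show gammaPDF (k:ℝ) r u = ENNReal.ofReal (gammaPDFReal (k:ℝ) r u) from rfl,
          gammaPDFReal_nat' k hk, if_pos hu.1, if_pos hu.2,
          ← ENNReal.ofReal_mul (mul_nonneg (mul_nonneg (by positivity)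
            (pow_nonneg hu.1 _)) (Real.exp_pos _).le)]
      · rw [Set.indicator_of_notMem hu]
        simp only [Pi.mul_apply]
        rcases not_and_or.mp hu with h0 | h1
        · rw [show gammaPDF (k:ℝ) r u = ENNReal.ofReal (gammaPDFReal (k:ℝ) r u) from rfl,
            gammaPDFReal_nat' k hk, if_neg h0, ENNReal.ofReal_zero, zero_mul]
        · rw [if_neg h1, mul_zero]
    rw [hLHS, lintegral_indicator measurableSet_Icc _,
      ← ofReal_integral_eq_lintegral_ofReal
        ((by fun_prop : Continuous (fun u => (c * u ^ (k-1) * rexp (-(r*u)))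
          * rexp (-(r * (b-u))))).integrableOn_Icc)
        ((ae_restrict_iff' measurableSet_Icc).mpr (ae_of_all _ fun u hu => by
          have : (0:ℝ) ≤ u := hu.1
          positivity))]
    congr 1
    have hpt : ∀ u ∈ Icc (0:ℝ) b, (c * u ^ (k-1) * rexp (-(r*u))) * rexp (-(r * (b-u)))
        = (c * rexp (-(r*b))) * u ^ (k-1) := by
      intro u _
      rw [mul_assoc (c * u ^ (k-1)), ← Real.exp_add,
        show -(r*u) + -(r*(b-u)) = -(r*b) from by ring]
      ring
    rw [setIntegral_congr_fun measurableSet_Icc hpt, integral_Icc_eq_integral_Ioc,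
      ← intervalIntegral.integral_of_le hb, intervalIntegral.integral_const_mul, integral_pow]
    have hk0 : (k:ℝ) ≠ 0 := by exact_mod_cast Nat.one_le_iff_ne_zero.mp hk
    rw [show (k-1) + 1 = k from by omega, zero_pow (by omega), sub_zero,
      show ((k-1 : ℕ) : ℝ) + 1 = (k : ℝ) from by rw [Nat.cast_sub hk]; push_cast; ring]
    ring
  · rw [if_neg hb]
    have hzero : ∀ u : ℝ, (gammaPDF (k:ℝ) r * fun u => (if u ≤ b then
        ENNReal.ofReal (rexp (-(r * (b - u)))) else 0)) u = 0 := by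
      intro u
      simp only [Pi.mul_apply]
      by_cases hu : 0 ≤ u
      · rw [if_neg (by linarith : ¬ u ≤ b), mul_zero]
      · rw [gammaPDF_of_neg (lt_of_not_ge hu), zero_mul]
    rw [lintegral_congr hzero, lintegral_zero]

lemma beta_nat' (m n : ℕ) {t : ℝ} (ht : 0 < t) :
    ∫ v in (0:ℝ)..t, v ^ m * (t - v) ^ n
      = (m.factorial * n.factorial / (m + n + 1).factorial : ℝ) * t ^ (m + n + 1) := by
  have h1 : ∫ x in (0:ℝ)..t, (x : ℂ) ^ ((m+1 : ℂ) - 1) * ((t : ℂ) - x) ^ ((n+1 : ℂ) - 1)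
      = (t : ℂ) ^ ((m+1 : ℂ) + (n+1) - 1) * Complex.betaIntegral (m+1) (n+1) :=
    Complex.betaIntegral_scaled (m+1) (n+1) ht
  have hb : Complex.Gamma (m+1) * Complex.Gamma (n+1)
      = Complex.Gamma ((m+1) + (n+1)) * Complex.betaIntegral (m+1) (n+1) :=
    Complex.Gamma_mul_Gamma_eq_betaIntegral (by simp; positivity) (by simp; positivity)
  have hbeta : Complex.betaIntegral (m+1) (n+1)
      = ((m.factorial * n.factorial / (m+n+1).factorial : ℝ) : ℂ) := by
    have h3 : ((m:ℂ)+1) + ((n:ℂ)+1) = ((m+n+1 : ℕ) : ℂ) + 1 := by push_cast; ring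
    rw [h3, Complex.Gamma_nat_eq_factorial, Complex.Gamma_nat_eq_factorial,
      Complex.Gamma_nat_eq_factorial] at hb
    have hne : ((m+n+1).factorial : ℂ) ≠ 0 := Nat.cast_ne_zero.mpr (Nat.factorial_ne_zero _)
    push_cast
    rw [eq_div_iff hne]
    linear_combination -hb
  have h2 : ∫ x in (0:ℝ)..t, (x : ℂ) ^ ((m+1 : ℂ) - 1) * ((t : ℂ) - x) ^ ((n+1 : ℂ) - 1)
      = ((∫ v in (0:ℝ)..t, v ^ m * (t - v) ^ n : ℝ) : ℂ) := by
    rw [← intervalIntegral.integral_ofReal]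
    refine intervalIntegral.integral_congr fun x _ => ?_
    rw [show (m+1 : ℂ) - 1 = (m : ℂ) from by ring, show (n+1 : ℂ) - 1 = (n : ℂ) from by ring,
      Complex.cpow_natCast, Complex.cpow_natCast]
    push_cast
    ring
  have h4 : (t : ℂ) ^ ((m+1 : ℂ) + (n+1) - 1) = ((t ^ (m+n+1) : ℝ) : ℂ) := by
    rw [show (m+1 : ℂ) + (n+1) - 1 = ((m+n+1 : ℕ) : ℂ) from by push_cast; ring,
      Complex.cpow_natCast]
    push_cast
    ring
  rw [h2, h4, hbeta] at h1
  rw [← Complex.ofReal_mul] at h1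
  have h5 := Complex.ofReal_injective h1
  rw [h5]
  ring

lemma exp_series' (y : ℝ) : rexp y = ∑' j : ℕ, y ^ j / j.factorial := by
  rw [Real.exp_eq_exp_ℝ, NormedSpace.exp_eq_tsum_div]

lemma series_identity' (k : ℕ) (hk : 1 ≤ k) (x : ℝ) {t : ℝ} (ht : 0 < t) :
    ∫ v in (0:ℝ)..t, v ^ (k-1) * (t-v) ^ k * rexp (x * v)
      = ∑' j : ℕ, x ^ j / j.factorial *
          (((k-1+j).factorial * k.factorial / (2*k+j).factorial : ℝ) * t ^ (2*k+j)) := by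
  set f : ℕ → ℝ → ℝ := fun j v => x ^ j / j.factorial * (v ^ (k-1+j) * (t-v) ^ k) with hf
  have hpt : ∀ v : ℝ, v ^ (k-1) * (t-v) ^ k * rexp (x * v) = ∑' j, f j v := by
    intro v
    rw [exp_series', ← tsum_mul_left]
    congr 1
    funext j
    rw [hf]
    simp only
    rw [mul_pow, pow_add]
    ring
  have hsummable : Summable (fun j : ℕ => t ^ (2*k) * ((|x| * t) ^ j / j.factorial)) :=
    (Real.summable_pow_div_factorial (|x| * t)).mul_left _
  have hbound : ∀ j : ℕ, ∫⁻ v in Ioc 0 t, ‖f j v‖₊ ∂volume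
      ≤ ENNReal.ofReal (t ^ (2*k) * ((|x| * t) ^ j / j.factorial)) := by
    intro j
    have hb : ∀ v ∈ Ioc (0:ℝ) t, (‖f j v‖₊ : ℝ≥0∞)
        ≤ ENNReal.ofReal (|x| ^ j / j.factorial * (t ^ (k-1+j) * t ^ k)) := by
      intro v hv
      rw [← enorm_eq_nnnorm, ← ofReal_norm]
      apply ENNReal.ofReal_le_ofReal
      rw [hf]
      simp only [norm_mul, norm_div, norm_pow, Real.norm_eq_abs]
      have h1 : |v| ≤ t := by rw [abs_of_pos hv.1]; exact hv.2
      have h2 : |t - v| ≤ t := by rw [abs_of_nonneg (by linarith [hv.2])]; linarith [hv.1]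
      have h3 : (|(j.factorial : ℝ)| : ℝ) = j.factorial := abs_of_pos (by positivity)
      rw [h3]
      gcongr
    calc ∫⁻ v in Ioc 0 t, ‖f j v‖₊ ∂volume
        ≤ ∫⁻ _ in Ioc 0 t,
            ENNReal.ofReal (|x| ^ j / j.factorial * (t ^ (k-1+j) * t ^ k)) ∂volume :=
          setLIntegral_mono measurable_const (fun v hv => hb v hv)
      _ = ENNReal.ofReal (|x| ^ j / j.factorial * (t ^ (k-1+j) * t ^ k)) * ENNReal.ofReal t := by
          rw [setLIntegral_const, Real.volume_Ioc, sub_zero]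
      _ ≤ ENNReal.ofReal (t ^ (2*k) * ((|x| * t) ^ j / j.factorial)) := by
          rw [← ENNReal.ofReal_mul (by positivity)]
          apply ENNReal.ofReal_le_ofReal
          apply le_of_eq
          have hexp2 : t ^ (k-1+j) * t ^ k * t = t ^ (2*k) * t ^ j := by
            rw [← pow_add, ← pow_succ, ← pow_add, show k-1+j+k+1 = 2*k + j from by omega]
          calc |x| ^ j / j.factorial * (t ^ (k-1+j) * t ^ k) * t
              = (t ^ (k-1+j) * t ^ k * t) * (|x| ^ j / j.factorial) := by ring
            _ = t ^ (2*k) * t ^ j * (|x| ^ j / j.factorial) := by rw [hexp2]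
            _ = t ^ (2*k) * ((|x| * t) ^ j / j.factorial) := by rw [mul_pow]; ring
  have hne : ∑' j, ∫⁻ v, ‖f j v‖₊ ∂(volume.restrict (Ioc 0 t)) ≠ ∞ := by
    refine ne_top_of_le_ne_top ?_ (ENNReal.tsum_le_tsum hbound)
    rw [← ENNReal.ofReal_tsum_of_nonneg (fun j => by positivity) hsummable]
    exact ENNReal.ofReal_ne_top
  rw [intervalIntegral.integral_of_le ht.le,
    setIntegral_congr_fun measurableSet_Ioc (fun v _ => hpt v),
    MeasureTheory.integral_tsum
      (fun j => ((by fun_prop : Continuous (f j))).aestronglyMeasurable.restrict) hne]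
  refine tsum_congr fun j => ?_
  rw [← intervalIntegral.integral_of_le ht.le]
  have : ∀ v : ℝ, f j v = x ^ j / j.factorial * (v ^ (k-1+j) * (t-v) ^ k) := fun v => rfl
  rw [intervalIntegral.integral_congr (fun v _ => this v),
    intervalIntegral.integral_const_mul, beta_nat' (k-1+j) k ht,
    show (k-1+j) + k + 1 = 2*k + j from by omega]

end Aux

/-- distribution of the alternating-rate counting process, even case. -/
theorem counting_eq_even {Ω : Type*} [MeasurableSpace Ω] (P : Measure Ω) [IsProbabilityMeasure P]
    (l1 l2 t : ℝ) (hl1 : 0 < l1) (hl2 : 0 < l2) (ht : 0 < t)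
    (W : ℕ → Ω → ℝ) (hmeas : ∀ i, Measurable (W i))
    (hindep : iIndepFun W P)
    (hdist : ∀ i, P.map (W i) = expMeasure (if Even i then l1 else l2))
    (k : ℕ) (hk : 1 ≤ k) :
    (P (countEq W (2 * k) t)).toReal =
      (l1 * t) ^ k * (l2 * t) ^ k * Real.exp (-(l1 * t)) *
        mittagLeffler 1 (2 * k + 1) k (t * (l1 - l2)) := by
  classical
  set U : Ω → ℝ := fun ω => ∑ i ∈ Finset.range k, W (2*i) ω with hU
  set V : Ω → ℝ := fun ω => ∑ i ∈ Finset.range k, W (2*i+1) ω with hV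
  set S : Ω → ℝ := fun ω => arrival W (2*k) ω with hS
  have hSm : Measurable S := Finset.measurable_sum _ (fun i _ => hmeas i)
  have hUm : Measurable U := Finset.measurable_sum _ (fun i _ => hmeas _)
  have hVm : Measurable V := Finset.measurable_sum _ (fun i _ => hmeas _)
  have hWm := hmeas (2*k)
  have hkpos : (0:ℝ) < k := by exact_mod_cast hk
  haveI : IsProbabilityMeasure (expMeasure l1) := isProbabilityMeasure_expMeasure hl1
  haveI : IsProbabilityMeasure (gammaMeasure (k:ℝ) l1) := isProbabilityMeasure_gammaMeasure hkpos hl1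
  haveI : IsProbabilityMeasure (gammaMeasure (k:ℝ) l2) := isProbabilityMeasure_gammaMeasure hkpos hl2
  haveI : IsProbabilityMeasure (P.map S) := Measure.isProbabilityMeasure_map hSm.aemeasurable
  -- laws
  have hlawW : P.map (W (2*k)) = expMeasure l1 := by
    rw [hdist (2*k), if_pos (even_two_mul k)]
  have hlawU : P.map U = gammaMeasure k l1 := by
    refine law_sum' P W hmeas hindep hl1 (fun i => 2*i) (fun a b h => by dsimp only; omega)
      (fun i => by rw [hdist (2*i), if_pos (even_two_mul i)]) k hk
  have hlawV : P.map V = gammaMeasure k l2 := by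
    refine law_sum' P W hmeas hindep hl2 (fun i => 2*i+1) (fun a b h => by dsimp only; omega)
      (fun i => by
        rw [hdist (2*i+1), if_neg (by simp [Nat.even_add_one, Nat.even_mul])]) k hk
  -- event as preimage
  set B : Set (ℝ×ℝ) := {p | p.1 ≤ t ∧ t < p.1 + p.2} with hBdef
  have hB : MeasurableSet B :=
    (measurableSet_le measurable_fst measurable_const).inter
      (measurableSet_lt measurable_const (measurable_fst.add measurable_snd))
  have hA : countEq W (2*k) t = (fun ω => (S ω, W (2*k) ω)) ⁻¹' B := by
    ext ω
    simp only [countEq, Set.mem_setOf_eq, Set.mem_preimage, hBdef, hS]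
    rw [show arrival W (2*k+1) ω = arrival W (2*k) ω + W (2*k) ω from Finset.sum_range_succ _ _]
  -- independence S ⊥ W(2k)
  have hIndepSW : IndepFun S (W (2*k)) P := by
    have h := hindep.indepFun_finsetSum_of_notMem hmeas
      (by simp : (2*k) ∉ Finset.range (2*k))
    have e : (∑ j ∈ Finset.range (2*k), W j) = S := by
      funext ω
      rw [Finset.sum_apply]
      rfl
    rwa [e] at h
  have key1 : P (countEq W (2*k) t) = ((P.map S).prod (expMeasure l1)) B := by
    rw [hA, ← Measure.map_apply (hSm.prodMk hWm) hB,
      (indepFun_iff_map_prod_eq_prod_map_map hSm.aemeasurable hWm.aemeasurable).mp hIndepSW,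
      hlawW]
  set F : ℝ → ℝ≥0∞ := fun s => if s ≤ t then ENNReal.ofReal (rexp (-(l1 * (t - s)))) else 0
    with hF
  have hFm : Measurable F := Measurable.ite measurableSet_Iic (by fun_prop) measurable_const
  have key2 : ((P.map S).prod (expMeasure l1)) B = ∫⁻ s, F s ∂(P.map S) := by
    rw [Measure.prod_apply hB]
    refine lintegral_congr fun s => ?_
    by_cases hs : s ≤ t
    · have hpre : Prod.mk s ⁻¹' B = Ioi (t - s) := by
        ext v
        simp only [hBdef, Set.mem_preimage, Set.mem_setOf_eq, Set.mem_Ioi]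
        constructor
        · rintro ⟨_, h2⟩; linarith
        · intro h; exact ⟨hs, by linarith⟩
      rw [hpre, expMeasure_Ioi' hl1 (by linarith), hF]
      simp only
      rw [if_pos hs]
    · have hpre : Prod.mk s ⁻¹' B = ∅ := by
        ext v
        simp only [hBdef, Set.mem_preimage, Set.mem_setOf_eq, Set.mem_empty_iff_false,
          iff_false, not_and]
        intro h; exact absurd h hs
      rw [hpre, measure_empty, hF]
      simp only
      rw [if_neg hs]
  -- law of S
  have hIndepVU : IndepFun V U P := by
    have h := indep_sum_sum' hmeas hindep
      ((Finset.range k).image (fun i => 2*i+1)) ((Finset.range k).image (fun i => 2*i))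
      (by
        simp only [Finset.disjoint_left, Finset.mem_image, Finset.mem_range]
        rintro a ⟨i, _, rfl⟩ ⟨j, _, hj⟩
        omega)
    have eV : (fun ω => ∑ i ∈ (Finset.range k).image (fun i => 2*i+1), W i ω) = V := by
      funext ω
      rw [Finset.sum_image (fun a _ b _ h => by omega)]
    have eU : (fun ω => ∑ i ∈ (Finset.range k).image (fun i => 2*i), W i ω) = U := by
      funext ω
      rw [Finset.sum_image (fun a _ b _ h => by omega)]
    rwa [eV, eU] at h
  have hmapS : P.map S = ((P.map V).prod (P.map U)).map (fun p : ℝ×ℝ => p.1 + p.2) := by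
    rw [← (indepFun_iff_map_prod_eq_prod_map_map hVm.aemeasurable hUm.aemeasurable).mp hIndepVU,
      Measure.map_map measurable_add (hVm.prodMk hUm)]
    congr 1
    funext ω
    simp only [Function.comp, hS, hU, hV, arrival]
    rw [sum_range_two_mul' (fun i => W i ω) k]
    ring
  have key3 : ∫⁻ s, F s ∂(P.map S)
      = ∫⁻ v, ∫⁻ u, F (v + u) ∂(gammaMeasure k l1) ∂(gammaMeasure k l2) := by
    rw [hmapS, lintegral_map hFm measurable_add, hlawU, hlawV,
      lintegral_prod (fun z : ℝ×ℝ => F (z.1+z.2)) ((hFm.comp measurable_add).aemeasurable)]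
  have key4 : ∀ v : ℝ, ∫⁻ u, F (v + u) ∂(gammaMeasure k l1)
      = if 0 ≤ t - v then ENNReal.ofReal
          (l1 ^ k / (k-1).factorial * ((t-v)^k / k) * rexp (-(l1 * (t - v)))) else 0 := by
    intro v
    rw [← lintegral_gamma_tail' k hk hl1 (t - v)]
    refine lintegral_congr fun u => ?_
    rw [hF]
    simp only
    by_cases h : u ≤ t - v
    · rw [if_pos (by linarith), if_pos h, show t - (v+u) = t - v - u from by ring]
    · rw [if_neg (by intro hc; exact h (by linarith)), if_neg h]
  have key34 : ∫⁻ v, ∫⁻ u, F (v + u) ∂(gammaMeasure k l1) ∂(gammaMeasure k l2)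
      = ∫⁻ v, (if 0 ≤ t - v then ENNReal.ofReal
          (l1 ^ k / (k-1).factorial * ((t-v)^k / k) * rexp (-(l1 * (t - v)))) else 0)
          ∂(gammaMeasure k l2) :=
    lintegral_congr fun v => key4 v
  -- outer integral
  set f2 : ℝ → ℝ := fun v => (l2 ^ k / (k-1).factorial * v ^ (k-1) * rexp (-(l2*v)))
      * (l1 ^ k / (k-1).factorial * ((t-v)^k / k) * rexp (-(l1 * (t - v)))) with hf2
  have key5 : ∫⁻ v, (if 0 ≤ t - v then ENNReal.ofReal
        (l1 ^ k / (k-1).factorial * ((t-v)^k / k) * rexp (-(l1 * (t - v)))) else 0)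
        ∂(gammaMeasure k l2)
      = ENNReal.ofReal (∫ v in Icc (0:ℝ) t, f2 v) := by
    have hGm : Measurable (fun v : ℝ => if 0 ≤ t - v then ENNReal.ofReal
        (l1 ^ k / (k-1).factorial * ((t-v)^k / k) * rexp (-(l1 * (t - v)))) else 0) := by
      refine Measurable.ite ?_ (by fun_prop) measurable_const
      have : {v : ℝ | 0 ≤ t - v} = Iic t := by ext v; simp [sub_nonneg]
      rw [this]; exact measurableSet_Iic
    have hpdfm : Measurable (gammaPDF (k:ℝ) l2) := (measurable_gammaPDFReal _ _).ennreal_ofReal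
    rw [show gammaMeasure (k : ℝ) l2 = volume.withDensity (gammaPDF (k:ℝ) l2) from rfl,
      lintegral_withDensity_eq_lintegral_mul volume hpdfm hGm]
    have hLHS : (fun v => (gammaPDF (k:ℝ) l2 * fun v => if 0 ≤ t - v then ENNReal.ofReal
        (l1 ^ k / (k-1).factorial * ((t-v)^k / k) * rexp (-(l1 * (t - v)))) else 0) v)
        = (Icc 0 t).indicator (fun v => ENNReal.ofReal (f2 v)) := by
      funext v
      by_cases hv : v ∈ Icc 0 t
      · rw [Set.indicator_of_mem hv]
        simp only [Pi.mul_apply]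
        rw [show gammaPDF (k:ℝ) l2 v = ENNReal.ofReal (gammaPDFReal (k:ℝ) l2 v) from rfl,
          gammaPDFReal_nat' k hk, if_pos hv.1, if_pos (by linarith [hv.2] : 0 ≤ t - v),
          ← ENNReal.ofReal_mul (mul_nonneg (mul_nonneg (by positivity)
            (pow_nonneg hv.1 _)) (Real.exp_pos _).le)]
      · rw [Set.indicator_of_notMem hv]
        simp only [Pi.mul_apply]
        rcases not_and_or.mp hv with h0 | h1
        · rw [show gammaPDF (k:ℝ) l2 v = ENNReal.ofReal (gammaPDFReal (k:ℝ) l2 v) from rfl,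
            gammaPDFReal_nat' k hk, if_neg h0, ENNReal.ofReal_zero, zero_mul]
        · rw [if_neg (by intro hc; exact h1 (by linarith)), mul_zero]
    rw [hLHS, lintegral_indicator measurableSet_Icc _,
      ← ofReal_integral_eq_lintegral_ofReal
        ((by fun_prop : Continuous f2).integrableOn_Icc)
        ((ae_restrict_iff' measurableSet_Icc).mpr (ae_of_all _ fun v hv => by
          have h0v : (0:ℝ) ≤ v := hv.1
          have hvt : (0:ℝ) ≤ t - v := by linarith [hv.2]
          rw [hf2]
          have ha : (0:ℝ) ≤ l2 ^ k / (k-1).factorial * v ^ (k-1) * rexp (-(l2*v)) := by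
            positivity
          have hb : (0:ℝ) ≤ l1 ^ k / (k-1).factorial * ((t-v)^k / k) * rexp (-(l1 * (t - v))) := by
            have := pow_nonneg hvt k
            positivity
          exact mul_nonneg ha hb))]
  rw [key1, key2, key3, key34, key5, ENNReal.toReal_ofReal (by
    refine setIntegral_nonneg measurableSet_Icc fun v hv => ?_
    have h0v : (0:ℝ) ≤ v := hv.1
    have hvt : (0:ℝ) ≤ t - v := by linarith [hv.2]
    have ha : (0:ℝ) ≤ l2 ^ k / (k-1).factorial * v ^ (k-1) * rexp (-(l2*v)) := by positivity
    have hb : (0:ℝ) ≤ l1 ^ k / (k-1).factorial * ((t-v)^k / k) * rexp (-(l1 * (t - v))) := by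
      have := pow_nonneg hvt k
      positivity
    exact mul_nonneg ha hb)]
  -- now a purely real computation
  have hIcc : ∫ v in Icc (0:ℝ) t, f2 v = ∫ v in (0:ℝ)..t, f2 v := by
    rw [integral_Icc_eq_integral_Ioc, intervalIntegral.integral_of_le ht.le]
  set C : ℝ := l1 ^ k * l2 ^ k / ((k-1).factorial * (k-1).factorial * k) * rexp (-(l1*t)) with hC
  have hre : ∀ v : ℝ, f2 v = C * (v ^ (k-1) * (t-v) ^ k * rexp ((l1-l2) * v)) := by
    intro v
    have hexp : rexp (-(l2*v)) * rexp (-(l1 * (t - v))) = rexp (-(l1*t)) * rexp ((l1-l2)*v) := by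
      rw [← Real.exp_add, ← Real.exp_add]
      congr 1
      ring
    rw [hf2, hC]
    calc (l2 ^ k / (k-1).factorial * v ^ (k-1) * rexp (-(l2*v)))
          * (l1 ^ k / (k-1).factorial * ((t-v)^k / k) * rexp (-(l1 * (t - v))))
        = (l2 ^ k / (k-1).factorial * v ^ (k-1)) * (l1 ^ k / (k-1).factorial * ((t-v)^k / k))
          * (rexp (-(l2*v)) * rexp (-(l1 * (t - v)))) := by ring
      _ = _ := by rw [hexp]; ring
  rw [hIcc, intervalIntegral.integral_congr (fun v _ => hre v),
    intervalIntegral.integral_const_mul, series_identity' k hk (l1-l2) ht]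
  -- Mittag-Leffler unfolding
  have hkne : (k:ℝ) ≠ 0 := by exact_mod_cast Nat.one_le_iff_ne_zero.mp hk
  have hML : mittagLeffler 1 (2 * k + 1) k (t * (l1 - l2))
      = ∑' j : ℕ, ((k-1+j).factorial : ℝ) / ((k-1).factorial * j.factorial)
          * (t * (l1 - l2)) ^ j / (2*k+j).factorial := by
    rw [mittagLeffler, if_neg hkne]
    refine tsum_congr fun j => ?_
    rw [show (k:ℝ) + (j:ℝ) = ((k-1+j : ℕ) : ℝ) + 1 by
        rw [Nat.cast_add, Nat.cast_sub hk]; push_cast; ring,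
      Real.Gamma_nat_eq_factorial,
      show (1:ℝ) * (j:ℝ) + (2 * (k:ℝ) + 1) = ((2*k+j : ℕ) : ℝ) + 1 by push_cast; ring,
      Real.Gamma_nat_eq_factorial,
      show (k:ℝ) = ((k-1 : ℕ) : ℝ) + 1 by rw [Nat.cast_sub hk]; push_cast; ring,
      Real.Gamma_nat_eq_factorial]
  rw [hML]
  -- final algebra: termwise comparison of the two series
  rw [← tsum_mul_left]
  rw [show (l1 * t) ^ k * (l2 * t) ^ k * rexp (-(l1 * t))
      * ∑' j : ℕ, ((k-1+j).factorial : ℝ) / ((k-1).factorial * j.factorial)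
          * (t * (l1 - l2)) ^ j / (2*k+j).factorial
    = ∑' j : ℕ, (l1 * t) ^ k * (l2 * t) ^ k * rexp (-(l1 * t))
        * (((k-1+j).factorial : ℝ) / ((k-1).factorial * j.factorial)
          * (t * (l1 - l2)) ^ j / (2*k+j).factorial) from (tsum_mul_left).symm]
  refine tsum_congr fun j => ?_
  have hfac : (k.factorial : ℝ) = k * (k-1).factorial := by
    obtain ⟨m, rfl⟩ := Nat.exists_eq_add_of_le hk
    rw [show 1 + m - 1 = m from by omega, show 1 + m = m + 1 from by omega, Nat.factorial_succ]
    push_cast; ring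
  have ht2 : t ^ (2*k+j) = t ^ k * t ^ k * t ^ j := by
    rw [← pow_add, ← pow_add]
    congr 1
    omega
  have hfne1 : ((k-1).factorial : ℝ) ≠ 0 := by
    exact_mod_cast Nat.factorial_ne_zero _
  have hfne2 : ((2*k+j).factorial : ℝ) ≠ 0 := by
    exact_mod_cast Nat.factorial_ne_zero _
  have hfne3 : ((j).factorial : ℝ) ≠ 0 := by
    exact_mod_cast Nat.factorial_ne_zero _
  rw [hC, ht2, mul_pow, mul_pow, mul_pow, hfac]
  field_simp
end
end

section
/- (Theorem 2.1, even case.) Let t > 0, λ1, λ2 > 0 and k ≥ 1 an integer, and set S_{2k}(t) = ∑_{i=1}^{2k} (−1)^{i−1} T_i. For every Borel set A ⊆ (−t, 0), the conditional probability P(S_{2k}(t) ∈ A | N(t) = 2k) equals ∫_A e^{−(λ1−λ2)s} (−s)^{k−1} (t+s)^{k} / ( E^{k}_{1,2k+1}(t(λ1−λ2)) · k! (k−1)! · t^{2k} ) ds. -/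
open MeasureTheory ProbabilityTheory Real
open scoped ENNReal

noncomputable section

variable {Ω : Type*}

section AuxProofs

lemma betaNat (b a : ℕ) {t : ℝ} (ht : 0 ≤ t) :
    ∫ y in (0:ℝ)..t, y ^ a * (t - y) ^ b
      = (a.factorial * b.factorial / (a + b + 1).factorial) * t ^ (a + b + 1) := by
  induction b generalizing a with
  | zero =>
    simp only [pow_zero, mul_one, integral_pow, Nat.factorial_zero, Nat.add_zero,
      Nat.cast_one, mul_one]
    rw [zero_pow (by omega : a + 1 ≠ 0), Nat.factorial_succ]
    push_cast
    have : (0:ℝ) < a.factorial := by positivity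
    field_simp
    ring
  | succ b ih =>
    have hderiv : ∀ y : ℝ, HasDerivAt (fun y : ℝ => y ^ (a+1) * (t - y) ^ (b+1) / (a+1))
        ((y ^ a * (t - y) ^ (b+1)) - ((b+1) * (y ^ (a+1) * (t - y) ^ b)) / (a+1)) y := by
      intro y
      have h1 : HasDerivAt (fun y : ℝ => y ^ (a+1)) ((a+1) * y ^ a) y := by
        simpa using hasDerivAt_pow (a+1) y
      have h2 : HasDerivAt (fun y : ℝ => (t - y) ^ (b+1)) (-((b+1) * (t - y) ^ b)) y := by
        have := (hasDerivAt_pow (b+1) (t - y)).comp y (((hasDerivAt_id y).const_sub t))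
        simpa [mul_comm, Function.comp_def] using this
      have := (h1.mul h2).div_const ((a:ℝ)+1)
      refine this.congr_deriv ?_
      field_simp
      ring
    have hint : ∫ y in (0:ℝ)..t,
        ((y ^ a * (t - y) ^ (b+1)) - ((b+1) * (y ^ (a+1) * (t - y) ^ b)) / (a+1)) = 0 := by
      rw [intervalIntegral.integral_eq_sub_of_hasDerivAt (fun y _ => hderiv y)]
      · simp [zero_pow, sub_self]
      · apply Continuous.intervalIntegrable
        continuity
    have hi1 : IntervalIntegrable (fun y : ℝ => y ^ a * (t - y) ^ (b+1)) volume 0 t := by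
      apply Continuous.intervalIntegrable; continuity
    have hi2 : IntervalIntegrable (fun y : ℝ => ((b:ℝ)+1) * (y ^ (a+1) * (t - y) ^ b) / ((a:ℝ)+1))
        volume 0 t := by
      apply Continuous.intervalIntegrable; continuity
    rw [intervalIntegral.integral_sub hi1 hi2] at hint
    have heq : ∫ y in (0:ℝ)..t, y ^ a * (t - y) ^ (b+1)
        = ∫ y in (0:ℝ)..t, ((b:ℝ)+1) * (y ^ (a+1) * (t - y) ^ b) / ((a:ℝ)+1) := by
      linarith
    rw [heq]
    have hre : ∀ y : ℝ, ((b:ℝ)+1) * (y ^ (a+1) * (t - y) ^ b) / ((a:ℝ)+1)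
        = (((b:ℝ)+1)/((a:ℝ)+1)) * (y ^ (a+1) * (t - y) ^ b) := fun y => by ring
    simp_rw [hre]
    rw [intervalIntegral.integral_const_mul, ih (a+1)]
    have h1 : ((a + (b+1) + 1).factorial : ℝ) = (a + b + 2) * (a + b + 1).factorial := by
      have : a + (b+1) + 1 = (a + b + 1) + 1 := by omega
      rw [this, Nat.factorial_succ]; push_cast; ring_nf
    have h2 : ((a+1).factorial : ℝ) = (a+1) * a.factorial := by
      rw [Nat.factorial_succ]; push_cast; ring
    have h3 : ((b+1).factorial : ℝ) = (b+1) * b.factorial := by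
      rw [Nat.factorial_succ]; push_cast; ring
    have h4 : ((a + 1 + b + 1).factorial : ℝ) = (a + b + 2).factorial := by
      norm_num; congr 1; omega
    have h5 : ((a+b+2).factorial : ℝ) = (a+b+2) * (a+b+1).factorial := by
      rw [Nat.factorial_succ]; push_cast; ring_nf
    have h6 : a + 1 + b + 1 = a + b + 2 := by omega
    have h7 : a + (b+1) + 1 = a + b + 2 := by omega
    rw [h2, h3]
    have hfa : (0:ℝ) < a.factorial := by positivity
    have hfb : (0:ℝ) < b.factorial := by positivity
    have hf1 : (0:ℝ) < (a+b+1).factorial := by positivity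
    field_simp
    ring


lemma exp_tsum (x : ℝ) : Real.exp x = ∑' n : ℕ, x ^ n / n.factorial := by
  rw [Real.exp_eq_exp_ℝ, NormedSpace.exp_eq_tsum_div]

lemma betaNatIoo (b a : ℕ) {t : ℝ} (ht : 0 ≤ t) :
    ∫ y in Set.Ioo (0:ℝ) t, y ^ a * (t - y) ^ b
      = (a.factorial * b.factorial / (a + b + 1).factorial) * t ^ (a + b + 1) := by
  rw [← integral_Ioc_eq_integral_Ioo, ← intervalIntegral.integral_of_le ht]
  exact betaNat b a ht

lemma key_integral (m t : ℝ) (ht : 0 < t) (k : ℕ) (hk : 1 ≤ k) :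
    ∫ y in Set.Ioo (0:ℝ) t, y ^ (k - 1) * Real.exp (m * y) * (t - y) ^ k
      = mittagLeffler 1 (2 * k + 1) k (t * m) * k.factorial * (k - 1).factorial * t ^ (2 * k) := by
  classical
  set F : ℕ → ℝ → ℝ := fun j y => m ^ j / j.factorial * (y ^ (k - 1 + j) * (t - y) ^ k) with hF
  have hcont : ∀ j, Continuous (F j) := by intro j; continuity
  have hInt : ∀ j, IntegrableOn (F j) (Set.Ioo 0 t) volume := fun j =>
    ((hcont j).integrableOn_Icc).mono_set Set.Ioo_subset_Icc_self
  have hexpo : ∀ j, k - 1 + j + k + 1 = 2 * k + j := fun j => by omega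
  have hB : ∀ j : ℕ, ∫ y in Set.Ioo (0:ℝ) t, y ^ (k - 1 + j) * (t - y) ^ k
      = ((k - 1 + j).factorial * k.factorial / (2 * k + j).factorial) * t ^ (2 * k + j) := by
    intro j
    rw [betaNatIoo k (k - 1 + j) ht.le, hexpo j]
  have hIntval : ∀ j : ℕ, ∫ y in Set.Ioo (0:ℝ) t, F j y
      = m ^ j / j.factorial * (((k - 1 + j).factorial * k.factorial / (2 * k + j).factorial)
          * t ^ (2 * k + j)) := by
    intro j
    rw [hF]
    simp only
    rw [integral_const_mul, hB j]
  have hnorm : ∀ j : ℕ, ∫ y in Set.Ioo (0:ℝ) t, ‖F j y‖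
      = |m| ^ j / j.factorial * (((k - 1 + j).factorial * k.factorial / (2 * k + j).factorial)
          * t ^ (2 * k + j)) := by
    intro j
    rw [setIntegral_congr_fun measurableSet_Ioo (g := fun y =>
        |m| ^ j / (j.factorial : ℝ) * (y ^ (k - 1 + j) * (t - y) ^ k))]
    · rw [integral_const_mul, hB j]
    · intro y hy
      have h1 : (0:ℝ) ≤ y := hy.1.le
      have h2 : (0:ℝ) ≤ t - y := by have := hy.2; linarith
      show ‖F j y‖ = _
      rw [hF]
      simp only [norm_eq_abs]
      rw [abs_mul, abs_div, abs_pow, abs_mul, abs_pow, abs_pow,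
        abs_of_nonneg h1, abs_of_nonneg h2, Nat.abs_cast]
  have hsum : Summable fun j : ℕ => ∫ y in Set.Ioo (0:ℝ) t, ‖F j y‖ := by
    apply Summable.of_nonneg_of_le (fun j => by
      rw [hnorm j]; positivity)
      (fun j => ?_) (((Real.summable_pow_div_factorial (|m| * t)).mul_left (t ^ (2 * k))))
    rw [hnorm]
    have hfle : ((k - 1 + j).factorial * k.factorial / ((2 * k + j).factorial) : ℝ) ≤ 1 := by
      rw [div_le_one (by positivity)]
      have := Nat.factorial_mul_factorial_dvd_factorial_add (k - 1 + j) (k + 1)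
      have hle : (k - 1 + j).factorial * k.factorial ≤ (2 * k + j).factorial := by
        calc (k - 1 + j).factorial * k.factorial
            ≤ (k - 1 + j).factorial * (k + 1).factorial :=
              Nat.mul_le_mul_left _ (Nat.factorial_le (by omega))
          _ ≤ (k - 1 + j + (k + 1)).factorial := Nat.le_of_dvd (Nat.factorial_pos _)
              (Nat.factorial_mul_factorial_dvd_factorial_add _ _)
          _ = (2 * k + j).factorial := by congr 1; omega
      exact_mod_cast hle
    calc |m| ^ j / j.factorial * (((k - 1 + j).factorial * k.factorial / (2 * k + j).factorial)
          * t ^ (2 * k + j))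
        ≤ |m| ^ j / j.factorial * (1 * t ^ (2 * k + j)) := by
          apply mul_le_mul_of_nonneg_left _ (by positivity)
          apply mul_le_mul_of_nonneg_right hfle (by positivity)
      _ = t ^ (2 * k) * ((|m| * t) ^ j / j.factorial) := by
          rw [pow_add, mul_pow]; ring
  have hpt : ∀ y : ℝ, y ^ (k - 1) * Real.exp (m * y) * (t - y) ^ k = ∑' j, F j y := by
    intro y
    have : ∀ j : ℕ, F j y = (y ^ (k - 1) * (t - y) ^ k) * ((m * y) ^ j / j.factorial) := by
      intro j
      rw [hF]; simp only
      rw [pow_add, mul_pow]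
      ring
    rw [tsum_congr this, tsum_mul_left, ← exp_tsum]
    ring
  have hswap : ∫ y in Set.Ioo (0:ℝ) t, y ^ (k - 1) * Real.exp (m * y) * (t - y) ^ k
      = ∑' j, ∫ y in Set.Ioo (0:ℝ) t, F j y := by
    rw [integral_tsum_of_summable_integral_norm (fun j => hInt j) hsum]
    exact setIntegral_congr_fun measurableSet_Ioo (fun y _ => hpt y)
  rw [hswap]
  -- now compute the RHS
  have hk0 : ((k:ℝ)) ≠ 0 := Nat.cast_ne_zero.mpr (by omega)
  rw [mittagLeffler, if_neg hk0]
  rw [← tsum_mul_right, ← tsum_mul_right, ← tsum_mul_right]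
  apply tsum_congr
  intro j
  rw [hIntval j]
  have hg1 : Real.Gamma ((k:ℝ) + j) = (k - 1 + j).factorial := by
    have : ((k:ℝ) + j) = ((k - 1 + j : ℕ) : ℝ) + 1 := by
      push_cast [Nat.cast_sub hk]; ring
    rw [this, Real.Gamma_nat_eq_factorial]
  have hg2 : Real.Gamma ((k:ℝ)) = (k - 1).factorial := by
    have : ((k:ℝ)) = ((k - 1 : ℕ) : ℝ) + 1 := by push_cast [Nat.cast_sub hk]; ring
    rw [this, Real.Gamma_nat_eq_factorial]
  have hg3 : Real.Gamma (1 * (j:ℝ) + (2 * (k:ℝ) + 1)) = (2 * k + j).factorial := by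
    have : (1 * (j:ℝ) + (2 * (k:ℝ) + 1)) = ((2 * k + j : ℕ) : ℝ) + 1 := by push_cast; ring
    rw [this, Real.Gamma_nat_eq_factorial]
  rw [hg1, hg2, hg3]
  have hfk : (0:ℝ) < (k - 1).factorial := by positivity
  have hfj : (0:ℝ) < (j.factorial : ℝ) := by positivity
  have hf2 : (0:ℝ) < ((2 * k + j).factorial : ℝ) := by positivity
  rw [mul_pow, pow_add]
  field_simp


/-- natural-shape gamma pdf -/
def npdf (n : ℕ) (r x : ℝ) : ℝ :=
  if 0 ≤ x then r ^ n / (n - 1).factorial * x ^ (n - 1) * Real.exp (-(r * x)) else 0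

lemma npdf_nonneg (n : ℕ) {r : ℝ} (hr : 0 < r) (x : ℝ) : 0 ≤ npdf n r x := by
  rw [npdf]; split_ifs with h
  · positivity
  · exact le_rfl

lemma measurable_npdf (n : ℕ) (r : ℝ) : Measurable (npdf n r) := by
  unfold npdf
  exact Measurable.ite measurableSet_Ici
    ((((measurable_id.pow_const _).const_mul _).mul ((measurable_id.const_mul r).neg.exp)))
    measurable_const

lemma gammaPDF_nat (n : ℕ) (hn : 1 ≤ n) (r : ℝ) (x : ℝ) :
    gammaPDF (n : ℝ) r x = ENNReal.ofReal (npdf n r x) := by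
  rw [gammaPDF_eq, npdf]
  congr 1
  split_ifs with h
  · have h1 : ((n:ℝ)) = ((n - 1 : ℕ) : ℝ) + 1 := by push_cast [Nat.cast_sub hn]; ring
    have h2 : Real.Gamma (n : ℝ) = (n - 1).factorial := by rw [h1, Real.Gamma_nat_eq_factorial]
    rw [h2]
    congr 1
    congr 1
    · rw [← Real.rpow_natCast r n]
    · rw [show ((n:ℝ) - 1) = ((n - 1 : ℕ) : ℝ) by push_cast [Nat.cast_sub hn]; ring,
        Real.rpow_natCast]
  · rfl

lemma exponentialPDF_eq_npdf (r x : ℝ) : exponentialPDF r x = ENNReal.ofReal (npdf 1 r x) := by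
  rw [exponentialPDF, exponentialPDFReal, ← gammaPDF, show ((1:ℝ)) = ((1:ℕ):ℝ) by norm_num,
    gammaPDF_nat 1 le_rfl]

lemma npdf_conv (n : ℕ) (hn : 1 ≤ n) {r : ℝ} (hr : 0 < r) (z : ℝ) :
    ∫⁻ x, ENNReal.ofReal (npdf n r x) * ENNReal.ofReal (npdf 1 r (z - x))
      = ENNReal.ofReal (npdf (n + 1) r z) := by
  have hnn : ∀ x, 0 ≤ npdf n r x * npdf 1 r (z - x) :=
    fun x => mul_nonneg (npdf_nonneg n hr x) (npdf_nonneg 1 hr _)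
  set h : ℝ → ℝ := fun x => npdf n r x * npdf 1 r (z - x) with hh
  have hind : h = (Set.Icc 0 z).indicator
      (fun x => r ^ (n + 1) / (n - 1).factorial * Real.exp (-(r * z)) * x ^ (n - 1)) := by
    funext x
    rw [hh]
    simp only
    by_cases hx : x ∈ Set.Icc 0 z
    · rw [Set.indicator_of_mem hx]
      obtain ⟨hx0, hxz⟩ := hx
      rw [npdf, if_pos hx0, npdf, if_pos (by linarith : (0:ℝ) ≤ z - x)]
      simp only [pow_one, Nat.sub_self, Nat.factorial_zero, Nat.cast_one, div_one, pow_zero,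
        mul_one]
      have he : rexp (-(r * x)) * rexp (-(r * (z - x))) = rexp (-(r * z)) := by
        rw [← Real.exp_add]; congr 1; ring
      linear_combination (r ^ (n + 1) / ((n - 1).factorial : ℝ) * x ^ (n - 1)) * he
    · rw [Set.indicator_of_notMem hx]
      rw [Set.mem_Icc, not_and_or] at hx
      rcases hx with hx | hx
      · rw [npdf, if_neg hx, zero_mul]
      · have hzx : ¬ (0:ℝ) ≤ z - x := by push_neg at hx ⊢; linarith
        simp only [npdf]
        rw [if_neg hzx, mul_zero]
  have hcont : Continuous (fun x : ℝ => r ^ (n + 1) / (n - 1).factorial * Real.exp (-(r * z))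
      * x ^ (n - 1)) := by continuity
  have hintg : Integrable h := by
    rw [hind]
    exact (hcont.integrableOn_Icc).integrable_indicator measurableSet_Icc
  have key : ∫⁻ x, ENNReal.ofReal (h x) = ENNReal.ofReal (∫ x, h x) :=
    (ofReal_integral_eq_lintegral_ofReal hintg (Filter.Eventually.of_forall hnn)).symm
  have : ∫⁻ x, ENNReal.ofReal (npdf n r x) * ENNReal.ofReal (npdf 1 r (z - x))
      = ∫⁻ x, ENNReal.ofReal (h x) := by
    apply lintegral_congr
    intro x
    rw [hh]
    simp only
    rw [ENNReal.ofReal_mul (npdf_nonneg n hr x)]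
  rw [this, key]
  congr 1
  rw [hind, integral_indicator measurableSet_Icc, integral_const_mul]
  rcases le_or_gt 0 z with hz | hz
  · have : ∫ x in Set.Icc (0:ℝ) z, x ^ (n - 1) = z ^ n / n := by
      rw [integral_Icc_eq_integral_Ioc, ← intervalIntegral.integral_of_le hz, integral_pow]
      rw [show n - 1 + 1 = n from by omega,
        show ((n - 1 : ℕ) : ℝ) + 1 = (n : ℝ) by push_cast [Nat.cast_sub hn]; ring]
      simp [zero_pow (show n ≠ 0 by omega)]
    rw [this, npdf, if_pos hz]
    have hfac : ((n:ℝ)) * (n - 1).factorial = n.factorial := by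
      rw [← Nat.mul_factorial_pred (by omega : n ≠ 0)]; push_cast; ring
    have h1 : (0:ℝ) < (n - 1).factorial := by positivity
    have h2 : (0:ℝ) < n.factorial := by positivity
    rw [show n + 1 - 1 = n from by omega]
    field_simp
    rw [← hfac]
    ring
  · rw [Set.Icc_eq_empty (by linarith), setIntegral_empty, npdf, if_neg (by linarith), mul_zero]

lemma gamma_conv (n : ℕ) (hn : 1 ≤ n) {r : ℝ} (hr : 0 < r) :
    ((gammaMeasure n r).prod (expMeasure r)).map (fun p : ℝ × ℝ => p.1 + p.2)
      = gammaMeasure ((n + 1 : ℕ) : ℝ) r := by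
  classical
  have hn0 : (0:ℝ) < n := by exact_mod_cast Nat.lt_of_lt_of_le Nat.zero_lt_one hn
  haveI h1 : IsProbabilityMeasure (gammaMeasure (n : ℝ) r) := isProbabilityMeasure_gammaMeasure hn0 hr
  haveI h2 : IsProbabilityMeasure (expMeasure r) := isProbabilityMeasure_expMeasure hr
  have hmeasadd : Measurable (fun p : ℝ × ℝ => p.1 + p.2) := measurable_fst.add measurable_snd
  have hfm : Measurable (gammaPDF (n : ℝ) r) := (measurable_gammaPDFReal _ _).ennreal_ofReal
  have hgm : Measurable (exponentialPDF r) := (measurable_exponentialPDFReal _).ennreal_ofReal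
  ext s hs
  rw [Measure.map_apply hmeasadd hs, Measure.prod_apply (hs.preimage hmeasadd)]
  have hindm : Measurable (s.indicator (1 : ℝ → ℝ≥0∞)) := measurable_const.indicator hs
  have hinner : ∀ x : ℝ, expMeasure r (Prod.mk x ⁻¹' ((fun p : ℝ × ℝ => p.1 + p.2) ⁻¹' s))
      = ∫⁻ z, exponentialPDF r (z - x) * s.indicator 1 z := by
    intro x
    have hpre : Prod.mk x ⁻¹' ((fun p : ℝ × ℝ => p.1 + p.2) ⁻¹' s) = (fun y => x + y) ⁻¹' s := rfl
    have hps : MeasurableSet ((fun y => x + y) ⁻¹' s) := hs.preimage (by fun_prop)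
    rw [hpre, expMeasure, gammaMeasure, withDensity_apply _ hps, ← lintegral_indicator hps]
    have hstep : ∀ y : ℝ, ((fun y => x + y) ⁻¹' s).indicator (gammaPDF 1 r) y
        = exponentialPDF r (y + x - x) * s.indicator 1 (y + x) := by
      intro y
      rw [Set.indicator_apply, Set.indicator_apply]
      simp only [Set.mem_preimage, add_sub_cancel_right]
      rw [show x + y = y + x from add_comm x y]
      split_ifs <;> simp [exponentialPDF, exponentialPDFReal, gammaPDF]
    rw [lintegral_congr hstep]
    have hcm : Measurable (fun z : ℝ => exponentialPDF r (z - x) * s.indicator 1 z) :=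
      (hgm.comp (measurable_id.sub measurable_const)).mul hindm
    exact (measurePreserving_add_right volume x).lintegral_comp hcm
  rw [lintegral_congr hinner]
  -- γ is withDensity
  rw [show gammaMeasure (n : ℝ) r = volume.withDensity (gammaPDF n r) from rfl]
  have hmul : Measurable (Function.uncurry fun (x z : ℝ) =>
      exponentialPDF r (z - x) * s.indicator 1 z) :=
    (hgm.comp (measurable_snd.sub measurable_fst)).mul (hindm.comp measurable_snd)
  rw [lintegral_withDensity_eq_lintegral_mul _ hfm hmul.lintegral_prod_right]
  simp only [Pi.mul_apply]
  have hswap : ∫⁻ x, gammaPDF (n:ℝ) r x * ∫⁻ z, exponentialPDF r (z - x) * s.indicator 1 z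
      = ∫⁻ z, ∫⁻ x, gammaPDF (n:ℝ) r x * (exponentialPDF r (z - x) * s.indicator 1 z) := by
    rw [← lintegral_lintegral_swap]
    · apply lintegral_congr
      intro x
      rw [lintegral_const_mul' (gammaPDF (n:ℝ) r x) _ ENNReal.ofReal_ne_top]
    · have : Measurable (Function.uncurry fun (x z : ℝ) =>
          gammaPDF (n:ℝ) r x * (exponentialPDF r (z - x) * s.indicator 1 z)) :=
        (hfm.comp measurable_fst).mul ((hgm.comp (measurable_snd.sub measurable_fst)).mul
          (hindm.comp measurable_snd))
      exact this.aemeasurable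
  rw [hswap]
  have hfinal : ∀ z : ℝ, ∫⁻ x, gammaPDF (n:ℝ) r x * (exponentialPDF r (z - x) * s.indicator 1 z)
      = gammaPDF ((n+1:ℕ):ℝ) r z * s.indicator 1 z := by
    intro z
    have : ∀ x : ℝ, gammaPDF (n:ℝ) r x * (exponentialPDF r (z - x) * s.indicator 1 z)
        = (gammaPDF (n:ℝ) r x * exponentialPDF r (z - x)) * s.indicator 1 z := fun x => by ring
    have hne : s.indicator (1 : ℝ → ℝ≥0∞) z ≠ ⊤ := by
      rw [Set.indicator_apply]; split_ifs <;> simp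
    rw [lintegral_congr this, lintegral_mul_const' _ _ hne]
    congr 1
    calc ∫⁻ x, gammaPDF (n:ℝ) r x * exponentialPDF r (z - x)
        = ∫⁻ x, ENNReal.ofReal (npdf n r x) * ENNReal.ofReal (npdf 1 r (z - x)) := by
          apply lintegral_congr
          intro x
          rw [gammaPDF_nat n hn, exponentialPDF_eq_npdf]
      _ = ENNReal.ofReal (npdf (n + 1) r z) := npdf_conv n hn hr z
      _ = gammaPDF ((n+1:ℕ):ℝ) r z := (gammaPDF_nat (n+1) (by omega) r z).symm
  rw [lintegral_congr hfinal]
  rw [show gammaMeasure ((n+1:ℕ):ℝ) r = volume.withDensity (gammaPDF ((n+1:ℕ):ℝ) r) from rfl,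
    withDensity_apply _ hs, ← lintegral_indicator hs]
  apply lintegral_congr
  intro z
  rw [Set.indicator_apply, Set.indicator_apply]
  split_ifs <;> simp


lemma map_sum_eq_gamma {Ω : Type*} [MeasurableSpace Ω] (P : Measure Ω) [IsProbabilityMeasure P]
    (W : ℕ → Ω → ℝ) (hmeas : ∀ i, Measurable (W i))
    (hindep : iIndepFun W P)
    (g : ℕ → ℕ) (hg : Function.Injective g) {r : ℝ} (hr : 0 < r)
    (hd : ∀ i, P.map (W (g i)) = expMeasure r) :
    ∀ m, 1 ≤ m → P.map (fun ω => ∑ i ∈ Finset.range m, W (g i) ω) = gammaMeasure (m : ℝ) r := by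
  classical
  intro m hm
  induction m, hm using Nat.le_induction with
  | base =>
    have h1 : (fun ω => ∑ i ∈ Finset.range 1, W (g i) ω) = W (g 0) :=
      funext fun ω => Finset.sum_range_one _
    rw [h1, hd 0, expMeasure, Nat.cast_one]
  | succ m hm ih =>
    have hSmeas : Measurable (fun ω => ∑ i ∈ Finset.range m, W (g i) ω) :=
      Finset.measurable_sum _ (fun i _ => hmeas (g i))
    set S : Finset ℕ := (Finset.range m).image g with hS
    have hdisj : Disjoint S {g m} := by
      rw [Finset.disjoint_singleton_right]
      intro hmem
      rw [hS, Finset.mem_image] at hmem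
      obtain ⟨i, hi, hgi⟩ := hmem
      rw [Finset.mem_range] at hi
      exact absurd (hg hgi) (by omega)
    have h0 := hindep.indepFun_finset S {g m} hdisj hmeas
    have hφ : Measurable (fun v : ({x // x ∈ S} → ℝ) => ∑ j ∈ S.attach, v j) :=
      Finset.measurable_sum _ (fun j _ => measurable_pi_apply j)
    have hψ : Measurable (fun v : ({x // x ∈ ({g m} : Finset ℕ)} → ℝ) =>
        v ⟨g m, Finset.mem_singleton_self _⟩) := measurable_pi_apply _
    have h1 := h0.comp hφ hψ
    have hindS : IndepFun (fun ω => ∑ i ∈ Finset.range m, W (g i) ω) (W (g m)) P := by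
      convert h1 using 1
      · funext a
        show ∑ i ∈ Finset.range m, W (g i) a = ∑ j ∈ S.attach, W (j : ℕ) a
        rw [Finset.sum_attach S (fun j => W j a), hS,
          Finset.sum_image (fun i _ j _ h => hg h)]
      · rfl
    have hpair := (indepFun_iff_map_prod_eq_prod_map_map hSmeas.aemeasurable
      (hmeas (g m)).aemeasurable).mp hindS
    have hcomp : (fun ω => ∑ i ∈ Finset.range (m + 1), W (g i) ω)
        = (fun p : ℝ × ℝ => p.1 + p.2) ∘ (fun ω =>
            ((∑ i ∈ Finset.range m, W (g i) ω), W (g m) ω)) :=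
      funext fun ω => by simp [Finset.sum_range_succ]
    rw [hcomp, ← Measure.map_map (g := fun p : ℝ × ℝ => p.1 + p.2) (measurable_fst.add measurable_snd)
      (hSmeas.prodMk (hmeas (g m))), hpair, ih, hd m]
    exact gamma_conv m hm hr


lemma expMeasure_Ioi {r : ℝ} (hr : 0 < r) {c : ℝ} (hc : 0 ≤ c) :
    expMeasure r (Set.Ioi c) = ENNReal.ofReal (Real.exp (-(r * c))) := by
  haveI := isProbabilityMeasure_expMeasure hr
  have h1 : expMeasure r (Set.Iic c) = ENNReal.ofReal (1 - Real.exp (-(r * c))) := by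
    rw [expMeasure, gammaMeasure, withDensity_apply _ measurableSet_Iic,
      show (gammaPDF 1 r) = exponentialPDF r from rfl,
      lintegral_exponentialPDF_eq_antiDeriv hr c, if_pos hc]
  have h2 : Set.Ioi c = (Set.Iic c)ᶜ := Set.compl_Iic.symm
  have h3 : (0:ℝ) ≤ 1 - Real.exp (-(r * c)) := by
    have : Real.exp (-(r * c)) ≤ 1 := Real.exp_le_one_iff.mpr (by nlinarith)
    linarith
  rw [h2, measure_compl measurableSet_Iic (measure_ne_top _ _), measure_univ, h1,
    ← ENNReal.ofReal_one, ← ENNReal.ofReal_sub _ h3]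
  congr 1
  ring

lemma triple_measure (k : ℕ) (hk : 1 ≤ k) {l1 l2 t : ℝ} (hl1 : 0 < l1) (hl2 : 0 < l2)
    (ht : 0 < t) (B : Set ℝ) (hB : MeasurableSet B) :
    ((gammaMeasure (k : ℝ) l1).prod ((gammaMeasure (k : ℝ) l2).prod (expMeasure l1)))
        {p : ℝ × ℝ × ℝ | -p.2.1 ∈ B ∧ p.1 + p.2.1 ≤ t ∧ t < p.1 + p.2.1 + p.2.2}
      = ENNReal.ofReal (∫ y in Set.Ioo 0 t ∩ (fun y => -y) ⁻¹' B,
          Real.exp (-(l1 * t)) * (l1 ^ k * l2 ^ k / ((k - 1).factorial * k.factorial))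
            * (y ^ (k - 1) * Real.exp ((l1 - l2) * y) * (t - y) ^ k)) := by
  classical
  have hkR : (0:ℝ) < (k:ℝ) := by exact_mod_cast Nat.lt_of_lt_of_le Nat.zero_lt_one hk
  haveI i1 : IsProbabilityMeasure (gammaMeasure (k : ℝ) l1) := isProbabilityMeasure_gammaMeasure hkR hl1
  haveI i2 : IsProbabilityMeasure (gammaMeasure (k : ℝ) l2) := isProbabilityMeasure_gammaMeasure hkR hl2
  haveI i3 : IsProbabilityMeasure (expMeasure l1) := isProbabilityMeasure_expMeasure hl1
  set G : Set (ℝ × ℝ × ℝ) :=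
    {p : ℝ × ℝ × ℝ | -p.2.1 ∈ B ∧ p.1 + p.2.1 ≤ t ∧ t < p.1 + p.2.1 + p.2.2} with hGdef
  have hG : MeasurableSet G := by
    rw [hGdef]
    simp only [Set.setOf_and]
    refine MeasurableSet.inter ?_ (MeasurableSet.inter ?_ ?_)
    · exact (measurable_snd.fst.neg) hB
    · exact measurableSet_le (by fun_prop) measurable_const
    · exact measurableSet_lt measurable_const (by fun_prop)
  set eB : ℝ → ℝ → ℝ≥0∞ := fun x y =>
    if -y ∈ B ∧ x + y ≤ t then ENNReal.ofReal (Real.exp (-(l1 * (t - (x + y))))) else 0 with heB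
  have heBmeas : Measurable (Function.uncurry eB) := by
    apply Measurable.ite
    · simp only [Set.setOf_and]
      refine MeasurableSet.inter ?_ ?_
      · exact (measurable_snd.neg) hB
      · exact measurableSet_le (measurable_fst.add measurable_snd) measurable_const
    · fun_prop
    · exact measurable_const
  have hεval : ∀ x y : ℝ, expMeasure l1 {z | -y ∈ B ∧ x + y ≤ t ∧ t < x + y + z} = eB x y := by
    intro x y
    by_cases h : -y ∈ B ∧ x + y ≤ t
    · have hset : {z : ℝ | -y ∈ B ∧ x + y ≤ t ∧ t < x + y + z} = Set.Ioi (t - (x + y)) := by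
        ext z
        simp only [Set.mem_setOf_eq, Set.mem_Ioi]
        constructor
        · rintro ⟨-, -, h3⟩; linarith
        · intro hz; exact ⟨h.1, h.2, by linarith⟩
      rw [hset, expMeasure_Ioi hl1 (by linarith [h.2]), heB]
      simp only [if_pos h]
    · have hset : {z : ℝ | -y ∈ B ∧ x + y ≤ t ∧ t < x + y + z} = ∅ := by
        ext z
        simp only [Set.mem_setOf_eq, Set.mem_empty_iff_false, iff_false, not_and_or]
        rw [not_and_or] at h
        rcases h with h | h
        · exact Or.inl h
        · exact Or.inr (Or.inl h)
      rw [hset, measure_empty, heB]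
      simp only [if_neg h]
  -- peel the product measure
  have step1 : ((gammaMeasure (k : ℝ) l1).prod ((gammaMeasure (k : ℝ) l2).prod (expMeasure l1))) G
      = ∫⁻ x, ∫⁻ y, gammaPDF (k:ℝ) l2 y * eB x y ∂volume ∂(gammaMeasure (k:ℝ) l1) := by
    rw [Measure.prod_apply hG]
    apply lintegral_congr
    intro x
    have hGx : MeasurableSet (Prod.mk x ⁻¹' G) := hG.preimage (measurable_prodMk_left)
    rw [Measure.prod_apply hGx]
    have : ∀ y : ℝ, expMeasure l1 (Prod.mk y ⁻¹' (Prod.mk x ⁻¹' G)) = eB x y := by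
      intro y
      have : Prod.mk y ⁻¹' (Prod.mk x ⁻¹' G) = {z | -y ∈ B ∧ x + y ≤ t ∧ t < x + y + z} := rfl
      rw [this, hεval x y]
    rw [lintegral_congr this]
    rw [show gammaMeasure (k:ℝ) l2 = volume.withDensity (gammaPDF (k:ℝ) l2) from rfl]
    have hpdfm2 : Measurable (gammaPDF (k:ℝ) l2) := (measurable_gammaPDFReal _ _).ennreal_ofReal
    have heBx : Measurable (fun y => eB x y) := heBmeas.comp measurable_prodMk_left
    rw [lintegral_withDensity_eq_lintegral_mul _ hpdfm2 heBx]
    rfl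
  rw [step1]
  rw [show gammaMeasure (k:ℝ) l1 = volume.withDensity (gammaPDF (k:ℝ) l1) from rfl]
  have hpdfm1 : Measurable (gammaPDF (k:ℝ) l1) := (measurable_gammaPDFReal _ _).ennreal_ofReal
  have hpdfm2 : Measurable (gammaPDF (k:ℝ) l2) := (measurable_gammaPDFReal _ _).ennreal_ofReal
  have hinner_meas : Measurable (Function.uncurry fun x y =>
      gammaPDF (k:ℝ) l2 y * eB x y) :=
    (hpdfm2.comp measurable_snd).mul heBmeas
  rw [lintegral_withDensity_eq_lintegral_mul _ hpdfm1
    hinner_meas.lintegral_prod_right]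
  simp only [Pi.mul_apply]
  have hswap : ∫⁻ x, gammaPDF (k:ℝ) l1 x * ∫⁻ y, gammaPDF (k:ℝ) l2 y * eB x y
      = ∫⁻ y, ∫⁻ x, gammaPDF (k:ℝ) l1 x * (gammaPDF (k:ℝ) l2 y * eB x y) := by
    rw [← lintegral_lintegral_swap]
    · apply lintegral_congr
      intro x
      rw [lintegral_const_mul' (gammaPDF (k:ℝ) l1 x) _ ENNReal.ofReal_ne_top]
    · have : Measurable (Function.uncurry fun (x y : ℝ) =>
          gammaPDF (k:ℝ) l1 x * (gammaPDF (k:ℝ) l2 y * eB x y)) :=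
        ((measurable_gammaPDFReal _ _).ennreal_ofReal.comp measurable_fst).mul hinner_meas
      exact this.aemeasurable
  rw [hswap]
  -- inner x integral
  set R : ℝ → ℝ≥0∞ := fun y => if -y ∈ B ∧ y ≤ t then
      ENNReal.ofReal (l1 ^ k / k.factorial * (t - y) ^ k * Real.exp (-(l1 * (t - y)))) else 0
    with hR
  have hxint : ∀ y : ℝ, ∫⁻ x, gammaPDF (k:ℝ) l1 x * eB x y = R y := by
    intro y
    by_cases hyB : -y ∈ B
    · set h : ℝ → ℝ := fun x => npdf k l1 x *
        (if x ≤ t - y then Real.exp (-(l1 * (t - (x + y)))) else 0) with hh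
      have hpt : ∀ x : ℝ, gammaPDF (k:ℝ) l1 x * eB x y = ENNReal.ofReal (h x) := by
        intro x
        rw [gammaPDF_nat k hk]
        simp only [heB, hh]
        rw [ENNReal.ofReal_mul (npdf_nonneg k hl1 x)]
        congr 1
        by_cases hxy : x + y ≤ t
        · rw [if_pos ⟨hyB, hxy⟩, if_pos (by linarith)]
        · rw [if_neg (by tauto), if_neg (by intro hx; exact hxy (by linarith)),
            ENNReal.ofReal_zero]
      rw [lintegral_congr hpt]
      have hnn : ∀ x, 0 ≤ h x := by
        intro x
        rw [hh]
        apply mul_nonneg (npdf_nonneg k hl1 x)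
        split_ifs
        · positivity
        · exact le_rfl
      have hind : h = (Set.Icc 0 (t - y)).indicator
          (fun x => l1 ^ k / (k - 1).factorial * Real.exp (-(l1 * (t - y))) * x ^ (k - 1)) := by
        funext x
        rw [hh]
        simp only
        by_cases hx : x ∈ Set.Icc 0 (t - y)
        · have hx0 : (0:ℝ) ≤ x := hx.1
          have hxz : x ≤ t - y := hx.2
          rw [Set.indicator_of_mem hx, npdf, if_pos hx0, if_pos hxz]
          have he : Real.exp (-(l1 * x)) * Real.exp (-(l1 * (t - (x + y))))
              = Real.exp (-(l1 * (t - y))) := by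
            rw [← Real.exp_add]; congr 1; ring
          linear_combination (l1 ^ k / ((k - 1).factorial : ℝ) * x ^ (k - 1)) * he
        · rw [Set.indicator_of_notMem hx]
          rw [Set.mem_Icc, not_and_or] at hx
          rcases hx with hx | hx
          · rw [npdf, if_neg hx, zero_mul]
          · rw [if_neg hx, mul_zero]
      have hcont : Continuous (fun x : ℝ =>
          l1 ^ k / ((k - 1).factorial : ℝ) * Real.exp (-(l1 * (t - y))) * x ^ (k - 1)) := by
        continuity
      have hintg : Integrable h := by
        rw [hind]
        exact (hcont.integrableOn_Icc).integrable_indicator measurableSet_Icc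
      rw [← ofReal_integral_eq_lintegral_ofReal hintg (Filter.Eventually.of_forall hnn)]
      rw [hind, integral_indicator measurableSet_Icc, integral_const_mul]
      simp only [hR]
      rcases le_or_gt y t with hyt | hyt
      · have hint : ∫ x in Set.Icc (0:ℝ) (t - y), x ^ (k - 1) = (t - y) ^ k / k := by
          rw [integral_Icc_eq_integral_Ioc, ← intervalIntegral.integral_of_le (by linarith),
            integral_pow, show k - 1 + 1 = k from by omega,
            show ((k - 1 : ℕ) : ℝ) + 1 = (k : ℝ) by push_cast [Nat.cast_sub hk]; ring]
          simp [zero_pow (show k ≠ 0 by omega)]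
        rw [hint, if_pos ⟨hyB, hyt⟩]
        congr 1
        have hfac : ((k:ℝ)) * (k - 1).factorial = k.factorial := by
          rw [← Nat.mul_factorial_pred (by omega : k ≠ 0)]; push_cast; ring
        have h1 : (0:ℝ) < (k - 1).factorial := by positivity
        have h2 : (0:ℝ) < (k.factorial : ℝ) := by positivity
        field_simp
        rw [← hfac]
        ring
      · rw [Set.Icc_eq_empty (by linarith), setIntegral_empty, mul_zero,
          if_neg (by intro hcon; linarith [hcon.2]), ENNReal.ofReal_zero]
    · have : ∀ x : ℝ, gammaPDF (k:ℝ) l1 x * eB x y = 0 := by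
        intro x
        simp only [heB]
        rw [if_neg (by tauto), mul_zero]
      rw [lintegral_congr this, lintegral_zero]
      simp only [hR]
      rw [if_neg (by tauto)]
  have hstep2 : ∫⁻ y, ∫⁻ x, gammaPDF (k:ℝ) l1 x * (gammaPDF (k:ℝ) l2 y * eB x y)
      = ∫⁻ y, gammaPDF (k:ℝ) l2 y * R y := by
    apply lintegral_congr
    intro y
    have : ∀ x : ℝ, gammaPDF (k:ℝ) l1 x * (gammaPDF (k:ℝ) l2 y * eB x y)
        = gammaPDF (k:ℝ) l2 y * (gammaPDF (k:ℝ) l1 x * eB x y) := fun x => by ring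
    rw [lintegral_congr this, lintegral_const_mul' (gammaPDF (k:ℝ) l2 y) _ ENNReal.ofReal_ne_top, hxint y]
  rw [hstep2]
  -- final y integral
  set ψ : ℝ → ℝ := fun y => if -y ∈ B ∧ y ≤ t then
      npdf k l2 y * (l1 ^ k / k.factorial * (t - y) ^ k * Real.exp (-(l1 * (t - y)))) else 0
    with hψ
  have hψpt : ∀ y : ℝ, gammaPDF (k:ℝ) l2 y * R y = ENNReal.ofReal (ψ y) := by
    intro y
    rw [gammaPDF_nat k hk]
    simp only [hR, hψ]
    split_ifs with h
    · rw [ENNReal.ofReal_mul (npdf_nonneg k hl2 y)]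
    · rw [mul_zero, ENNReal.ofReal_zero]
  rw [lintegral_congr hψpt]
  set ρ : ℝ → ℝ := fun y => (l2 ^ k / (k - 1).factorial * y ^ (k - 1) * Real.exp (-(l2 * y)))
      * (l1 ^ k / k.factorial * (t - y) ^ k * Real.exp (-(l1 * (t - y)))) with hρ
  set M : Set ℝ := Set.Icc 0 t ∩ (fun y => -y) ⁻¹' B with hM
  have hMmeas : MeasurableSet M := measurableSet_Icc.inter (measurable_neg hB)
  have hψind : ψ = M.indicator ρ := by
    funext y
    by_cases hmem : y ∈ M
    · have h0 : (0:ℝ) ≤ y := hmem.1.1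
      have hT : y ≤ t := hmem.1.2
      have hBmem : -y ∈ B := hmem.2
      rw [Set.indicator_of_mem hmem]
      simp only [hψ, hρ]
      rw [if_pos ⟨hBmem, hT⟩, npdf, if_pos h0]
    · rw [Set.indicator_of_notMem hmem]
      simp only [hψ]
      split_ifs with h
      · have h0 : ¬ (0 ≤ y) := by
          intro h0
          exact hmem ⟨⟨h0, h.2⟩, h.1⟩
        rw [npdf, if_neg h0, zero_mul]
      · rfl
  have hρcont : Continuous ρ := by rw [hρ]; fun_prop
  have hψint : Integrable ψ := by
    rw [hψind]
    exact ((hρcont.integrableOn_Icc).mono_set Set.inter_subset_left).integrable_indicator hMmeas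
  have hψnn : ∀ y, 0 ≤ ψ y := by
    intro y
    simp only [hψ]
    split_ifs with h
    · have h2 : (0:ℝ) ≤ t - y := by linarith [h.2]
      have := npdf_nonneg k hl2 y
      positivity
    · exact le_rfl
  rw [← ofReal_integral_eq_lintegral_ofReal hψint (Filter.Eventually.of_forall hψnn)]
  congr 1
  rw [hψind, integral_indicator hMmeas]
  have hae : M =ᵐ[volume] (Set.Ioo (0:ℝ) t ∩ (fun y : ℝ => -y) ⁻¹' B : Set ℝ) := by
    rw [hM]
    exact MeasureTheory.ae_eq_set_inter (MeasureTheory.Ioo_ae_eq_Icc).symm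
      Filter.EventuallyEq.rfl
  rw [setIntegral_congr_set hae]
  apply setIntegral_congr_fun (measurableSet_Ioo.inter (measurable_neg hB))
  intro y _
  rw [hρ]
  simp only
  have he : Real.exp (-(l2 * y)) * Real.exp (-(l1 * (t - y)))
      = Real.exp (-(l1 * t)) * Real.exp ((l1 - l2) * y) := by
    rw [← Real.exp_add, ← Real.exp_add]; congr 1; ring
  linear_combination (l2 ^ k / ((k - 1).factorial : ℝ) * y ^ (k - 1)
    * (l1 ^ k / (k.factorial : ℝ) * (t - y) ^ k)) * he


end AuxProofs

lemma arrival_split (W : ℕ → Ω → ℝ) (k : ℕ) (ω : Ω) :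
    arrival W (2 * k) ω
      = (∑ i ∈ Finset.range k, W (2 * i) ω) + ∑ i ∈ Finset.range k, W (2 * i + 1) ω := by
  induction k with
  | zero => simp [arrival]
  | succ k ih =>
    simp only [arrival] at ih ⊢
    rw [show 2 * (k + 1) = 2 * k + 1 + 1 from by ring, Finset.sum_range_succ,
      Finset.sum_range_succ, Finset.sum_range_succ (f := fun i => W (2 * i) ω),
      Finset.sum_range_succ (f := fun i => W (2 * i + 1) ω), ih]
    ring

lemma alt_sum (W : ℕ → Ω → ℝ) (k : ℕ) (ω : Ω) :
    ∑ i ∈ Finset.range (2 * k), (-1 : ℝ) ^ i * arrival W (i + 1) ω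
      = -∑ i ∈ Finset.range k, W (2 * i + 1) ω := by
  induction k with
  | zero => simp
  | succ k ih =>
    have h1 : (-1 : ℝ) ^ (2 * k) = 1 := by
      rw [pow_mul]; norm_num
    have h2 : (-1 : ℝ) ^ (2 * k + 1) = -1 := by
      rw [pow_succ, h1]; norm_num
    have h3 : arrival W (2 * k + 1 + 1) ω = arrival W (2 * k + 1) ω + W (2 * k + 1) ω := by
      simp [arrival, Finset.sum_range_succ]
    rw [show 2 * (k + 1) = 2 * k + 1 + 1 from by ring, Finset.sum_range_succ,
      Finset.sum_range_succ, ih, Finset.sum_range_succ, h1, h2, h3]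
    ring


/-- Theorem 2.1, even case: conditional density of the alternating sum
`S_{2k}(t) = ∑_{i=1}^{2k} (−1)^{i−1} T_i` given `N(t) = 2k`. -/
theorem cond_density_alt_sum_even {Ω : Type*} [MeasurableSpace Ω]
    (P : Measure Ω) [IsProbabilityMeasure P]
    (l1 l2 t : ℝ) (hl1 : 0 < l1) (hl2 : 0 < l2) (ht : 0 < t)
    (W : ℕ → Ω → ℝ) (hmeas : ∀ i, Measurable (W i))
    (hindep : iIndepFun W P)
    (hdist : ∀ i, P.map (W i) = expMeasure (if Even i then l1 else l2))
    (k : ℕ) (hk : 1 ≤ k)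
    (A : Set ℝ) (hA : MeasurableSet A) (hAsub : A ⊆ Set.Ioo (-t) 0) :
    (ProbabilityTheory.cond P (countEq W (2 * k) t)
        {ω | (∑ i ∈ Finset.range (2 * k), (-1 : ℝ) ^ i * arrival W (i + 1) ω) ∈ A}).toReal =
      ∫ s in A,
        Real.exp (-(l1 - l2) * s) * (-s) ^ (k - 1) * (t + s) ^ k /
          (mittagLeffler 1 (2 * k + 1) k (t * (l1 - l2)) * k.factorial * (k - 1).factorial *
            t ^ (2 * k)) := by
  classical
  set Xf : Ω → ℝ := fun ω => ∑ i ∈ Finset.range k, W (2 * i) ω with hXf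
  set Yf : Ω → ℝ := fun ω => ∑ i ∈ Finset.range k, W (2 * i + 1) ω with hYf
  set Zf : Ω → ℝ := W (2 * k) with hZf
  have hXmeas : Measurable Xf := Finset.measurable_sum _ (fun i _ => hmeas _)
  have hYmeas : Measurable Yf := Finset.measurable_sum _ (fun i _ => hmeas _)
  have hZmeas : Measurable Zf := hmeas _
  -- laws
  have hdX : ∀ i, P.map (W (2 * i)) = expMeasure l1 := by
    intro i
    rw [hdist, if_pos (even_two_mul i)]
  have hdY : ∀ i, P.map (W (2 * i + 1)) = expMeasure l2 := by
    intro i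
    rw [hdist, if_neg (by rw [Nat.even_iff]; omega)]
  have mapX : P.map Xf = gammaMeasure (k : ℝ) l1 :=
    map_sum_eq_gamma P W hmeas hindep (fun i => 2 * i) (fun a b h => by simp only at h; omega) hl1 hdX k hk
  have mapY : P.map Yf = gammaMeasure (k : ℝ) l2 :=
    map_sum_eq_gamma P W hmeas hindep (fun i => 2 * i + 1) (fun a b h => by simp only at h; omega) hl2 hdY k hk
  have mapZ : P.map Zf = expMeasure l1 := hdX k
  -- independence
  set ext : (S : Finset ℕ) → ({x // x ∈ S} → ℝ) → ℕ → ℝ :=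
    fun S v j => if h : j ∈ S then v ⟨j, h⟩ else 0 with hext
  have hextmeas : ∀ (S : Finset ℕ) (j : ℕ), Measurable (fun v => ext S v j) := by
    intro S j
    by_cases h : j ∈ S
    · simp only [hext, dif_pos h]
      exact measurable_pi_apply _
    · simp only [hext, dif_neg h]
      exact measurable_const
  set S1 : Finset ℕ := (Finset.range k).image (fun i => 2 * i) with hS1
  set S2 : Finset ℕ := (Finset.range k).image (fun i => 2 * i + 1) with hS2
  set T : Finset ℕ := S2 ∪ {2 * k} with hT
  have hmemS1 : ∀ i ∈ Finset.range k, 2 * i ∈ S1 := fun i hi =>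
    Finset.mem_image.mpr ⟨i, hi, rfl⟩
  have hmemT1 : ∀ i ∈ Finset.range k, 2 * i + 1 ∈ T := fun i hi =>
    Finset.mem_union_left _ (Finset.mem_image.mpr ⟨i, hi, rfl⟩)
  have hmemT2 : 2 * k ∈ T := Finset.mem_union_right _ (Finset.mem_singleton_self _)
  have hdisj1 : Disjoint S1 T := by
    rw [Finset.disjoint_left]
    intro a ha hb
    rw [hS1, Finset.mem_image] at ha
    obtain ⟨i, hi, rfl⟩ := ha
    rw [Finset.mem_range] at hi
    rw [hT, Finset.mem_union, hS2, Finset.mem_image, Finset.mem_singleton] at hb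
    rcases hb with ⟨j, hj, hje⟩ | hb
    · omega
    · omega
  have hdisj2 : Disjoint S2 {2 * k} := by
    rw [Finset.disjoint_singleton_right]
    intro hmem
    rw [hS2, Finset.mem_image] at hmem
    obtain ⟨i, hi, hie⟩ := hmem
    rw [Finset.mem_range] at hi
    omega
  have key1 : IndepFun Xf (fun ω => (Yf ω, Zf ω)) P := by
    have h0 := hindep.indepFun_finset S1 T hdisj1 hmeas
    have hφ1 : Measurable (fun v : ({x // x ∈ S1} → ℝ) =>
        ∑ i ∈ Finset.range k, ext S1 v (2 * i)) :=
      Finset.measurable_sum _ (fun i _ => hextmeas S1 (2 * i))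
    have hφ2 : Measurable (fun v : ({x // x ∈ T} → ℝ) =>
        ((∑ i ∈ Finset.range k, ext T v (2 * i + 1)), ext T v (2 * k))) :=
      (Finset.measurable_sum _ (fun i _ => hextmeas T (2 * i + 1))).prodMk (hextmeas T (2 * k))
    have h1 := h0.comp hφ1 hφ2
    convert h1 using 1
    · funext ω
      show Xf ω = ∑ i ∈ Finset.range k, ext S1 (fun j : {x // x ∈ S1} => W (↑j) ω) (2 * i)
      rw [hXf]
      refine Finset.sum_congr rfl (fun i hi => ?_)
      simp only [hext, dif_pos (hmemS1 i hi)]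
    · funext ω
      show (Yf ω, Zf ω) = (∑ i ∈ Finset.range k, ext T (fun j : {x // x ∈ T} => W (↑j) ω)
        (2 * i + 1), ext T (fun j : {x // x ∈ T} => W (↑j) ω) (2 * k))
      have hz : ext T (fun j : {x // x ∈ T} => W (↑j) ω) (2 * k) = Zf ω := by
        simp only [hext, dif_pos hmemT2]; rfl
      have hy : ∑ i ∈ Finset.range k, ext T (fun j : {x // x ∈ T} => W (↑j) ω) (2 * i + 1)
          = Yf ω := by
        rw [hYf]
        refine Finset.sum_congr rfl (fun i hi => ?_)
        simp only [hext, dif_pos (hmemT1 i hi)]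
      rw [hz, hy]
  have key2 : IndepFun Yf Zf P := by
    have h0 := hindep.indepFun_finset S2 {2 * k} hdisj2 hmeas
    have hφ : Measurable (fun v : ({x // x ∈ S2} → ℝ) => ∑ j ∈ S2.attach, v j) :=
      Finset.measurable_sum _ (fun j _ => measurable_pi_apply j)
    have hψ : Measurable (fun v : ({x // x ∈ ({2 * k} : Finset ℕ)} → ℝ) =>
        v ⟨2 * k, Finset.mem_singleton_self _⟩) := measurable_pi_apply _
    have h1 := h0.comp hφ hψ
    convert h1 using 1
    funext ω
    show Yf ω = ∑ j ∈ S2.attach, W (↑j) ω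
    rw [Finset.sum_attach S2 (fun j => W j ω), hS2,
      Finset.sum_image (fun i _ j _ h => by omega), hYf]
    rfl
  -- joint law
  have hYZmap : P.map (fun ω => (Yf ω, Zf ω)) = (gammaMeasure (k:ℝ) l2).prod (expMeasure l1) := by
    rw [(indepFun_iff_map_prod_eq_prod_map_map hYmeas.aemeasurable
      hZmeas.aemeasurable).mp key2, mapY, mapZ]
  have htriple : P.map (fun ω => (Xf ω, Yf ω, Zf ω))
      = (gammaMeasure (k:ℝ) l1).prod ((gammaMeasure (k:ℝ) l2).prod (expMeasure l1)) := by
    rw [(indepFun_iff_map_prod_eq_prod_map_map hXmeas.aemeasurable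
      (hYmeas.prodMk hZmeas).aemeasurable).mp key1, mapX, hYZmap]
  -- event identification
  have harr2k : ∀ ω, arrival W (2 * k) ω = Xf ω + Yf ω := fun ω => arrival_split W k ω
  have harr2k1 : ∀ ω, arrival W (2 * k + 1) ω = Xf ω + Yf ω + Zf ω := by
    intro ω
    have : arrival W (2 * k + 1) ω = arrival W (2 * k) ω + W (2 * k) ω := by
      simp [arrival, Finset.sum_range_succ]
    rw [this, harr2k ω, hZf]
  have hsetEq : ∀ B : Set ℝ,
      {ω | (∑ i ∈ Finset.range (2 * k), (-1 : ℝ) ^ i * arrival W (i + 1) ω) ∈ B}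
        ∩ countEq W (2 * k) t
      = (fun ω => (Xf ω, Yf ω, Zf ω)) ⁻¹'
          {p : ℝ × ℝ × ℝ | -p.2.1 ∈ B ∧ p.1 + p.2.1 ≤ t ∧ t < p.1 + p.2.1 + p.2.2} := by
    intro B
    ext ω
    simp only [Set.mem_inter_iff, Set.mem_setOf_eq, Set.mem_preimage, countEq]
    rw [alt_sum W k ω, harr2k ω, harr2k1 ω]
  have htriplemeas : Measurable (fun ω => (Xf ω, Yf ω, Zf ω)) :=
    hXmeas.prodMk (hYmeas.prodMk hZmeas)
  have hGmeas : ∀ B : Set ℝ, MeasurableSet B → MeasurableSet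
      {p : ℝ × ℝ × ℝ | -p.2.1 ∈ B ∧ p.1 + p.2.1 ≤ t ∧ t < p.1 + p.2.1 + p.2.2} := by
    intro B hB
    simp only [Set.setOf_and]
    refine MeasurableSet.inter ?_ (MeasurableSet.inter ?_ ?_)
    · exact (measurable_snd.fst.neg) hB
    · exact measurableSet_le (by fun_prop) measurable_const
    · exact measurableSet_lt measurable_const (by fun_prop)
  have hPB : ∀ B : Set ℝ, MeasurableSet B →
      P ({ω | (∑ i ∈ Finset.range (2 * k), (-1 : ℝ) ^ i * arrival W (i + 1) ω) ∈ B}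
        ∩ countEq W (2 * k) t)
      = ENNReal.ofReal (∫ y in Set.Ioo 0 t ∩ (fun y => -y) ⁻¹' B,
          Real.exp (-(l1 * t)) * (l1 ^ k * l2 ^ k / ((k - 1).factorial * k.factorial))
            * (y ^ (k - 1) * Real.exp ((l1 - l2) * y) * (t - y) ^ k)) := by
    intro B hB
    rw [hsetEq B, ← Measure.map_apply htriplemeas (hGmeas B hB), htriple,
      triple_measure k hk hl1 hl2 ht B hB]
  -- abbreviations
  set C : ℝ := Real.exp (-(l1 * t)) * (l1 ^ k * l2 ^ k / ((k - 1).factorial * k.factorial))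
    with hC
  set f : ℝ → ℝ := fun y => y ^ (k - 1) * Real.exp ((l1 - l2) * y) * (t - y) ^ k with hf
  have hCpos : 0 < C := by
    rw [hC]
    have h1 : (0:ℝ) < (k - 1).factorial := by positivity
    have h2 : (0:ℝ) < (k.factorial : ℝ) := by positivity
    positivity
  -- denominator
  have hEdecomp : countEq W (2 * k) t =
      {ω | (∑ i ∈ Finset.range (2 * k), (-1 : ℝ) ^ i * arrival W (i + 1) ω) ∈ Set.univ}
        ∩ countEq W (2 * k) t := by
    simp
  have hPE : P (countEq W (2 * k) t) = ENNReal.ofReal (∫ y in Set.Ioo 0 t, C * f y) := by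
    rw [hEdecomp, hPB Set.univ MeasurableSet.univ]
    congr 1
    rw [Set.preimage_univ, Set.inter_univ]
  have hEmeas : MeasurableSet (countEq W (2 * k) t) := by
    have harr : ∀ n, Measurable (fun ω => arrival W n ω) := fun n =>
      Finset.measurable_sum _ (fun i _ => hmeas i)
    exact (measurableSet_le (harr _) measurable_const).inter
      (measurableSet_lt measurable_const (harr _))
  -- numerator
  have hpreA : (fun y : ℝ => -y) ⁻¹' A ⊆ Set.Ioo 0 t := by
    intro y hy
    have h' : -t < -y ∧ -y < 0 := hAsub hy
    exact Set.mem_Ioo.mpr ⟨by linarith [h'.2], by linarith [h'.1]⟩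
  have hPA : P ({ω | (∑ i ∈ Finset.range (2 * k), (-1 : ℝ) ^ i * arrival W (i + 1) ω) ∈ A}
      ∩ countEq W (2 * k) t)
      = ENNReal.ofReal (∫ y in (fun y : ℝ => -y) ⁻¹' A, C * f y) := by
    rw [hPB A hA]
    congr 1
    rw [Set.inter_eq_self_of_subset_right hpreA]
  -- change of variables
  have hneg : ∫ y in (fun y : ℝ => -y) ⁻¹' A, f y = ∫ s in A, f (-s) := by
    have h1 : ∫ y in (fun y : ℝ => -y) ⁻¹' A, f y
        = ∫ y in (fun y : ℝ => -y) ⁻¹' A, (fun s => f (-s)) (-y) := by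
      refine setIntegral_congr_fun ((measurable_neg : Measurable (fun y : ℝ => -y)) hA)
        (fun y _ => ?_)
      simp only [neg_neg]
    rw [h1]
    exact (Measure.measurePreserving_neg (volume : Measure ℝ)).setIntegral_preimage_emb
      (MeasurableEquiv.neg ℝ).measurableEmbedding (fun s => f (-s)) A
  -- final computation
  rw [ProbabilityTheory.cond_apply hEmeas, Set.inter_comm, hPA, hPE]
  have hJ : ∫ y in Set.Ioo (0:ℝ) t, f y
      = mittagLeffler 1 (2 * k + 1) k (t * (l1 - l2)) * k.factorial * (k - 1).factorial
        * t ^ (2 * k) := key_integral (l1 - l2) t ht k hk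
  have hIA : (0:ℝ) ≤ ∫ y in (fun y : ℝ => -y) ⁻¹' A, C * f y := by
    refine setIntegral_nonneg ((measurable_neg : Measurable (fun y : ℝ => -y)) hA) (fun y hy => ?_)
    have hy2 := hpreA hy
    have h1 : (0:ℝ) ≤ y := hy2.1.le
    have h2 : (0:ℝ) ≤ t - y := by linarith [hy2.2]
    rw [hf]
    have := hCpos.le
    positivity
  rw [ENNReal.toReal_mul, ENNReal.toReal_inv, ENNReal.toReal_ofReal hIA,
    ENNReal.toReal_ofReal (by
      refine setIntegral_nonneg measurableSet_Ioo (fun y hy => ?_)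
      have h1 : (0:ℝ) ≤ y := hy.1.le
      have h2 : (0:ℝ) ≤ t - y := by linarith [hy.2]
      rw [hf]
      have := hCpos.le
      positivity)]
  rw [integral_const_mul, integral_const_mul, hneg, hJ]
  set D : ℝ := mittagLeffler 1 (2 * k + 1) k (t * (l1 - l2)) * k.factorial * (k - 1).factorial
    * t ^ (2 * k) with hD
  have hrhs : ∫ s in A,
      Real.exp (-(l1 - l2) * s) * (-s) ^ (k - 1) * (t + s) ^ k / D
      = (∫ s in A, f (-s)) / D := by
    rw [integral_div]
    congr 1
    refine setIntegral_congr_fun hA (fun s _ => ?_)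
    rw [hf]
    simp only
    rw [show (l1 - l2) * (-s) = -(l1 - l2) * s from by ring,
      show t - -s = t + s from by ring]
    ring
  rw [hrhs]
  obtain hD0 | hD0 := eq_or_ne D 0
  · rw [hD0]
    simp
  · field_simp [hCpos.ne', hD0]
end
end
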